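/- arXiv:math/0610814 — 4 statements merged into one kernel-verified Lean document; each statement's English description precedes it below -/
import Mathlib

section
/- Let λ > 1, k ≥ 0, and let (a_j)_{j≥0} be a bounded sequence of positive reals such that a_k a_{k+1} > 0 and λ^{j-1} a_{j-1}² = λ^j a_j a_{j+1} for all j ≥ k+1. Suppose moreover the rescaled sequence A_j = λ^{(j-k)/3 - 1/6} a_j / √(a_k a_{k+1}) satisfies A_k A_{k+1} = 1. Then a_j = λ^{1/3} a_{j+1} for all j ≥ k. -/
open Real

/-- For a bounded positive fixed point with a general finitely supported force,
the tail of the fixed point is geometric: `a j = λ^(1/3) a (j+1)` for `j ≥ k`. -/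
theorem dyadic_fixed_point_tail (l : ℝ) (hl : 1 < l) (k : ℕ)
    (a : ℕ → ℝ) (hpos : ∀ j : ℕ, 0 < a j)
    (hbdd : ∃ M : ℝ, ∀ j : ℕ, a j ≤ M)
    (hk : 0 < a k * a (k + 1))
    (hj : ∀ j : ℕ, k + 1 ≤ j →
      l ^ ((j : ℝ) - 1) * a (j - 1) ^ 2 = l ^ (j : ℝ) * a j * a (j + 1))
    (A : ℕ → ℝ)
    (hA : ∀ j : ℕ, A j = l ^ (((j : ℝ) - (k : ℝ)) / 3 - 1 / 6) * a j /
      Real.sqrt (a k * a (k + 1)))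
    (hnorm : A k * A (k + 1) = 1) :
    ∀ j : ℕ, k ≤ j → a j = l ^ ((1 : ℝ) / 3) * a (j + 1) := by
  obtain ⟨M, hM⟩ := hbdd
  have hl0 : (0:ℝ) < l := lt_trans one_pos hl
  obtain ⟨L, hLdef⟩ : ∃ L : ℝ, L = Real.log l := ⟨_, rfl⟩
  have hL : 0 < L := hLdef ▸ Real.log_pos hl
  have hs0 : 0 < Real.sqrt (a k * a (k+1)) := Real.sqrt_pos.mpr hk
  obtain ⟨σ, hσdef⟩ : ∃ σ : ℝ, σ = Real.log (Real.sqrt (a k * a (k+1))) := ⟨_, rfl⟩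
  obtain ⟨u, hudef⟩ : ∃ u : ℕ → ℝ, ∀ n : ℕ, u n = Real.log (a (k+n)) :=
    ⟨_, fun _ => rfl⟩
  obtain ⟨x, hxdef⟩ : ∃ x : ℕ → ℝ,
      ∀ n : ℕ, x n = (((n:ℝ))/3 - 1/6) * L + u n - σ := ⟨_, fun _ => rfl⟩
  -- x n = log (A (k+n))
  have hxA : ∀ n : ℕ, Real.log (A (k+n)) = x n := by
    intro n
    rw [hA (k+n)]
    rw [Real.log_div (mul_pos (Real.rpow_pos_of_pos hl0 _) (hpos _)).ne' hs0.ne',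
      Real.log_mul (Real.rpow_pos_of_pos hl0 _).ne' (hpos _).ne', Real.log_rpow hl0]
    rw [hxdef, hudef, hσdef, hLdef]
    push_cast
    ring
  -- recurrence for u
  have hrec : ∀ n : ℕ, 2 * u n = L + u (n+1) + u (n+2) := by
    intro n
    have h := hj (k+n+1) (by omega)
    have h1 : (k+n+1) - 1 = k+n := by omega
    rw [h1] at h
    have e1 : Real.log (l ^ (((k+n+1 : ℕ):ℝ) - 1) * a (k+n) ^ 2)
        = (((k+n+1 : ℕ):ℝ) - 1) * L + 2 * u n := by
      rw [Real.log_mul (Real.rpow_pos_of_pos hl0 _).ne'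
        (pow_ne_zero 2 (hpos _).ne'), Real.log_rpow hl0, Real.log_pow, hudef, hLdef]
      push_cast
      ring
    have e2 : Real.log (l ^ (((k+n+1 : ℕ):ℝ)) * a (k+n+1) * a (k+n+1+1))
        = (((k+n+1 : ℕ):ℝ)) * L + u (n+1) + u (n+2) := by
      rw [Real.log_mul (mul_ne_zero (Real.rpow_pos_of_pos hl0 _).ne'
          (hpos _).ne') (hpos _).ne',
        Real.log_mul (Real.rpow_pos_of_pos hl0 _).ne' (hpos _).ne',
        Real.log_rpow hl0]
      have h2 : k+n+1+1 = k+(n+2) := by omega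
      rw [h2]
      have h3 : k+n+1 = k+(n+1) := by omega
      rw [h3]
      rw [hudef, hudef, hLdef]
    have e3 := e1.symm.trans ((congrArg Real.log h).trans e2)
    linarith
  -- recurrence for x
  have hxrec : ∀ n : ℕ, x (n+2) = 2 * x n - x (n+1) := by
    intro n
    have h := hrec n
    rw [hxdef, hxdef, hxdef]
    push_cast
    linarith
  -- x 0 + x 1 = 0
  have hApos : ∀ n : ℕ, 0 < A n := by
    intro n
    rw [hA n]
    exact div_pos (mul_pos (Real.rpow_pos_of_pos hl0 _) (hpos _)) hs0
  have h01 : x 0 + x 1 = 0 := by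
    have hnorm' : A (k+0) * A (k+1) = 1 := hnorm
    rw [← hxA 0, ← hxA 1,
      ← Real.log_mul (hApos (k+0)).ne' (hApos (k+1)).ne', hnorm', Real.log_one]
  obtain ⟨d, hddef⟩ : ∃ d : ℝ, d = x 1 - x 0 := ⟨_, rfl⟩
  -- closed form
  have hclosed : ∀ n : ℕ, x n = -d/6 - (d/3) * (-2:ℝ)^n := by
    have key : ∀ n : ℕ, x n = -d/6 - (d/3) * (-2:ℝ)^n ∧
        x (n+1) = -d/6 - (d/3) * (-2:ℝ)^(n+1) := by
      intro n
      induction n with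
      | zero =>
        constructor
        · norm_num
          linarith
        · norm_num
          linarith
      | succ m ih =>
        refine ⟨ih.2, ?_⟩
        have h2 := hxrec m
        rw [ih.1, ih.2] at h2
        rw [show m+1+1 = m+2 from rfl] at h2 ⊢
        rw [h2, pow_succ, pow_succ]
        ring
    intro n; exact (key n).1
  -- upper bound
  obtain ⟨C0, hC0def⟩ : ∃ C0 : ℝ, C0 = Real.log M - σ - L/6 := ⟨_, rfl⟩
  have hub : ∀ n : ℕ, x n ≤ (n:ℝ)/3 * L + C0 := by
    intro n
    have hu1 : u n ≤ Real.log M := by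
      rw [hudef]
      exact Real.log_le_log (hpos _) (hM _)
    rw [hxdef]
    linarith
  -- d = 0
  have hd0 : d = 0 := by
    by_contra hd
    have habs : 0 < |d| := abs_pos.mpr hd
    obtain ⟨ε, hεdef⟩ : ∃ ε : ℝ, ε = |d|/3 := ⟨_, rfl⟩
    have hε0 : 0 < ε := by rw [hεdef]; positivity
    obtain ⟨m, hm⟩ := exists_nat_ge (max 1 ((|d|/6 + L + |C0| + 1)/ε))
    have hm1 : (1:ℝ) ≤ (m:ℝ) := le_trans (le_max_left _ _) hm
    have hm0 : (0:ℝ) ≤ (m:ℝ) := by linarith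
    have hm2 : |d|/6 + L + |C0| + 1 ≤ ε * (m:ℝ) := by
      have h := le_trans (le_max_right 1 ((|d|/6 + L + |C0| + 1)/ε)) hm
      rw [div_le_iff₀ hε0] at h
      linarith
    have hpow : ((m:ℝ)+1)^2 ≤ (2:ℝ)^(2*m) := by
      have hn : m+1 ≤ 2^m := Nat.lt_two_pow_self (n := m)
      have h1 : (m:ℝ) + 1 ≤ (2:ℝ)^m := by exact_mod_cast hn
      calc ((m:ℝ)+1)^2 ≤ ((2:ℝ)^m)^2 := by
            apply pow_le_pow_left₀ (by positivity) h1
        _ = (2:ℝ)^(2*m) := by rw [← pow_mul, mul_comm]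
    have hkey : (|d|/6 + L + |C0| + 1) * (m:ℝ) ≤ ε * (m:ℝ) * (m:ℝ) :=
      mul_le_mul_of_nonneg_right hm2 hm0
    have hC0abs : C0 ≤ |C0| := le_abs_self C0
    have hεP : ε * (((m:ℝ)+1)^2) ≤ ε * (2:ℝ)^(2*m) :=
      mul_le_mul_of_nonneg_left hpow hε0.le
    have hLm : L ≤ L * (m:ℝ) := le_mul_of_one_le_right hL.le hm1
    have hCm : |C0| ≤ |C0| * (m:ℝ) := le_mul_of_one_le_right (abs_nonneg _) hm1
    have hdm : |d|/6 ≤ |d|/6 * (m:ℝ) := le_mul_of_one_le_right (by positivity) hm1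
    have hem : (0:ℝ) ≤ ε * (m:ℝ) := mul_nonneg hε0.le hm0
    rcases lt_or_gt_of_ne hd with hneg | hposd
    · -- d < 0, use n = 2m
      have hx2 := hclosed (2*m)
      have hb := hub (2*m)
      push_cast at hb
      have hpm : (-2:ℝ)^(2*m) = (2:ℝ)^(2*m) := by
        rw [neg_pow, Even.neg_one_pow ⟨m, by ring⟩, one_mul]
      rw [hpm] at hx2
      have habsd : |d| = -d := abs_of_neg hneg
      have ha : ε * (2:ℝ)^(2*m) ≤ -|d|/6 + 2*(m:ℝ)/3 * L + C0 := by
        rw [hεdef, habsd]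
        linarith
      have hdmnn : (0:ℝ) ≤ |d| * (m:ℝ) := mul_nonneg (abs_nonneg _) hm0
      linarith [ha, hεP, hkey, hLm, hCm, hdmnn, hem, hC0abs, hm1, hε0, hL, habs]
    · -- d > 0, use n = 2m+1
      have hx2 := hclosed (2*m+1)
      have hb := hub (2*m+1)
      push_cast at hb
      have hpm : (-2:ℝ)^(2*m+1) = -(2 * (2:ℝ)^(2*m)) := by
        rw [pow_succ, neg_pow, Even.neg_one_pow ⟨m, by ring⟩, one_mul]
        ring
      rw [hpm] at hx2
      have habsd : |d| = d := abs_of_pos hposd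
      have hPnn : (0:ℝ) ≤ ε * (2:ℝ)^(2*m) := by positivity
      have ha : 2 * (ε * (2:ℝ)^(2*m)) ≤ |d|/6 + (2*(m:ℝ)+1)/3 * L + C0 := by
        rw [hεdef, habsd]
        linarith
      linarith [ha, hεP, hkey, hLm, hCm, hdm, hem, hC0abs, hm1, hε0, hL, hPnn]
  -- conclude
  intro j hjk
  obtain ⟨n, rfl⟩ := Nat.exists_eq_add_of_le hjk
  have h1 : x n = 0 := by rw [hclosed n, hd0]; ring
  have h2 : x (n+1) = 0 := by rw [hclosed (n+1), hd0]; ring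
  rw [hxdef] at h1 h2
  push_cast at h1 h2
  have hun : u n = L/3 + u (n+1) := by linarith
  rw [hudef, hudef] at hun
  have hexp := congrArg Real.exp hun
  rw [Real.exp_add, Real.exp_log (hpos (k+n)), Real.exp_log (hpos (k+(n+1)))] at hexp
  have hrw : l ^ ((1:ℝ)/3) = Real.exp (L/3) := by
    rw [Real.rpow_def_of_pos hl0, hLdef]
    ring_nf
  rw [hrw]
  have heq : k + (n+1) = k + n + 1 := by omega
  rw [heq] at hexp
  exact hexp
end

section
/- If a(t) is a solution of the forced dyadic system whose H^{5/6} norm is bounded on [T₁,T₂], then the total energy E(t) = (1/2)Σ_{j≥0} a_j(t)² satisfies the energy balance dE/dt = Σ_{j≥0} f_j a_j(t) for t ∈ (T₁,T₂). -/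
open Real MeasureTheory Filter Finset Topology

/-- Energy balance for regular solutions of the forced dyadic system:
if the `H^{5/6}` norm is bounded on `[T₁,T₂]`, the total energy
`E(t) = (1/2)∑ a_j(t)²` satisfies `dE/dt = ∑ f_j a_j`. -/
theorem dyadic_energy_balance (l : ℝ) (hl : l = (2 : ℝ) ^ ((5 : ℝ) / 2))
    (T₁ T₂ : ℝ) (hT : T₁ < T₂) (f : ℕ → ℝ) (hf : Summable (fun j => f j ^ 2))
    (a : ℕ → ℝ → ℝ)
    (hderiv0 : ∀ t ∈ Set.Icc T₁ T₂, HasDerivAt (a 0) (-(a 0 t * a 1 t) + f 0) t)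
    (hderiv : ∀ j : ℕ, 1 ≤ j → ∀ t ∈ Set.Icc T₁ T₂, HasDerivAt (a j)
      (l ^ ((j : ℝ) - 1) * a (j - 1) t ^ 2 - l ^ (j : ℝ) * a j t * a (j + 1) t + f j) t)
    (hsum : ∀ t ∈ Set.Icc T₁ T₂,
      Summable (fun j : ℕ => (2 : ℝ) ^ ((5 : ℝ) / 3 * j) * a j t ^ 2))
    (hreg : ∃ M : ℝ, ∀ t ∈ Set.Icc T₁ T₂,
      (∑' j : ℕ, (2 : ℝ) ^ ((5 : ℝ) / 3 * j) * a j t ^ 2) ≤ M) :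
    ∀ t ∈ Set.Ioo T₁ T₂,
      HasDerivAt (fun s => (1 : ℝ) / 2 * ∑' j : ℕ, a j s ^ 2)
        (∑' j : ℕ, f j * a j t) t := by
  obtain ⟨M, hM⟩ := hreg
  have hT12 : T₁ ≤ T₂ := hT.le
  have hT₁ : T₁ ∈ Set.Icc T₁ T₂ := ⟨le_refl _, hT12⟩
  set r : ℝ := (2:ℝ) ^ (-(5:ℝ)/6) with hr
  have hr_pos : (0:ℝ) < r := Real.rpow_pos_of_pos two_pos _
  have hr_lt : r < 1 := Real.rpow_lt_one_of_one_lt_of_neg one_lt_two (by norm_num)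
  have hM0 : 0 ≤ M := le_trans (tsum_nonneg fun j => by positivity) (hM T₁ hT₁)
  have hl_pos : 0 < l := by rw [hl]; positivity
  have key : l * r ^ 2 * r = 1 := by
    rw [hl, hr, ← Real.rpow_natCast ((2:ℝ) ^ (-(5:ℝ)/6)) 2,
      ← Real.rpow_mul (by norm_num : (0:ℝ) ≤ 2),
      ← Real.rpow_add two_pos, ← Real.rpow_add two_pos]
    norm_num
  have hrinv : ∀ j : ℕ, r ^ (2*j) * (2:ℝ) ^ ((5:ℝ)/3 * j) = 1 := by
    intro j
    rw [hr, ← Real.rpow_natCast ((2:ℝ) ^ (-(5:ℝ)/6)) (2*j),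
      ← Real.rpow_mul (by norm_num : (0:ℝ) ≤ 2), ← Real.rpow_add two_pos,
      show (-(5:ℝ)/6 * ((2*j : ℕ):ℝ) + (5:ℝ)/3*j) = 0 by push_cast; ring, Real.rpow_zero]
  have hsq_eq : ∀ (s : ℝ) (j : ℕ), a j s ^ 2
      = r ^ (2*j) * ((2:ℝ) ^ ((5:ℝ)/3 * j) * a j s ^ 2) := by
    intro s j
    rw [← mul_assoc, hrinv, one_mul]
  have hterm_le : ∀ s ∈ Set.Icc T₁ T₂, ∀ j : ℕ,
      (2:ℝ) ^ ((5:ℝ)/3 * j) * a j s ^ 2 ≤ M := by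
    intro s hs j
    exact le_trans (Summable.le_tsum (hsum s hs) j fun i _ => by positivity) (hM s hs)
  have hsq_le : ∀ s ∈ Set.Icc T₁ T₂, ∀ j : ℕ, a j s ^ 2 ≤ M * r ^ (2*j) := by
    intro s hs j
    rw [hsq_eq s j, mul_comm M]
    exact mul_le_mul_of_nonneg_left (hterm_le s hs j) (by positivity)
  have habs : ∀ s ∈ Set.Icc T₁ T₂, ∀ j : ℕ, |a j s| ≤ Real.sqrt M * r ^ j := by
    intro s hs j
    have h1 : |a j s| = Real.sqrt (a j s ^ 2) := (Real.sqrt_sq_eq_abs _).symm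
    rw [h1]
    calc Real.sqrt (a j s ^ 2) ≤ Real.sqrt (M * r ^ (2*j)) :=
          Real.sqrt_le_sqrt (hsq_le s hs j)
      _ = Real.sqrt M * r ^ j := by
          rw [show (2*j) = j*2 by ring, pow_mul, Real.sqrt_mul hM0,
            Real.sqrt_sq (by positivity)]
  -- summability of the bound
  have hu_sum : Summable (fun j : ℕ => |f j| * (Real.sqrt M * r ^ j)) := by
    have hgeo : Summable (fun j : ℕ => (r^2) ^ j) :=
      summable_geometric_of_lt_one (by positivity) (by nlinarith)
    have hmaj : Summable (fun j : ℕ => (f j ^ 2 + M * (r^2) ^ j) / 2) :=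
      ((hf.add (hgeo.mul_left M)).div_const 2)
    refine Summable.of_nonneg_of_le (fun j => by positivity) (fun j => ?_) hmaj
    have h1 : (Real.sqrt M * r ^ j)^2 = M * (r^2)^j := by
      rw [mul_pow, Real.sq_sqrt hM0, ← pow_mul, ← pow_mul, mul_comm 2 j]
    nlinarith [sq_nonneg (|f j| - Real.sqrt M * r ^ j), sq_abs (f j),
      mul_self_nonneg (|f j| - Real.sqrt M * r ^ j)]
  have hfa_sum : ∀ s ∈ Set.Icc T₁ T₂, Summable (fun j : ℕ => f j * a j s) := by
    intro s hs
    refine Summable.of_norm_bounded hu_sum (fun j => ?_)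
    rw [Real.norm_eq_abs, abs_mul]
    exact mul_le_mul_of_nonneg_left (habs s hs j) (abs_nonneg _)
  have hsq_sum : ∀ s ∈ Set.Icc T₁ T₂, Summable (fun j : ℕ => a j s ^ 2) := by
    intro s hs
    have hgeo : Summable (fun j : ℕ => M * (r^2) ^ j) :=
      (summable_geometric_of_lt_one (by positivity) (by nlinarith)).mul_left M
    refine Summable.of_nonneg_of_le (fun j => by positivity) (fun j => ?_) hgeo
    have h := hsq_le s hs j
    rwa [show (2*j) = j*2 by ring, pow_mul,
      show ((r:ℝ)^j)^2 = (r^2)^j by rw [← pow_mul, ← pow_mul, mul_comm]] at h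
  -- continuity of each a j on the interval
  have hcont : ∀ j : ℕ, ContinuousOn (a j) (Set.Icc T₁ T₂) := by
    intro j
    match j with
    | 0 => exact fun t ht => (hderiv0 t ht).continuousAt.continuousWithinAt
    | (n+1) => exact fun t ht =>
        ((hderiv (n+1) (by omega) t ht).continuousAt).continuousWithinAt
  set g : ℝ → ℝ := fun s => ∑' j : ℕ, f j * a j s with hg
  have hgcont : ContinuousOn g (Set.Icc T₁ T₂) := by
    refine continuousOn_tsum (fun j => continuousOn_const.mul (hcont j)) hu_sum
      (fun n x hx => ?_)
    rw [Real.norm_eq_abs, abs_mul]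
    exact mul_le_mul_of_nonneg_left (habs x hx n) (abs_nonneg _)
  -- derivatives in ℕ-power form
  have hderiv' : ∀ n : ℕ, ∀ t ∈ Set.Icc T₁ T₂, HasDerivAt (a (n+1))
      (l ^ n * a n t ^ 2 - l ^ (n+1) * a (n+1) t * a (n+2) t + f (n+1)) t := by
    intro n t ht
    have h := hderiv (n+1) (by omega) t ht
    have e1 : ((n+1 : ℕ):ℝ) - 1 = (n : ℕ) := by push_cast; ring
    rw [e1, Real.rpow_natCast, Real.rpow_natCast] at h
    simpa using h
  -- derivative of partial energies (telescoping)
  have hEN : ∀ N : ℕ, ∀ t ∈ Set.Icc T₁ T₂,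
      HasDerivAt (fun s => ∑ j ∈ Finset.range (N+1), (1:ℝ)/2 * a j s ^ 2)
        ((∑ j ∈ Finset.range (N+1), f j * a j t) - l ^ N * a N t ^ 2 * a (N+1) t) t := by
    intro N
    induction N with
    | zero =>
        intro t ht
        have h0 := ((hderiv0 t ht).pow 2).const_mul ((1:ℝ)/2)
        have hfun : (fun s => ∑ j ∈ Finset.range 1, (1:ℝ)/2 * a j s ^ 2)
            = fun s => (1:ℝ)/2 * a 0 s ^ 2 := by
          funext s; rw [Finset.sum_range_one]
        rw [hfun]
        refine h0.congr_deriv ?_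
        rw [Finset.sum_range_one]
        push_cast
        ring
    | succ N ih =>
        intro t ht
        have h1 := ((hderiv' N t ht).pow 2).const_mul ((1:ℝ)/2)
        have h2 := (ih t ht).add h1
        have hfun : (fun s => ∑ j ∈ Finset.range (N+2), (1:ℝ)/2 * a j s ^ 2)
            = fun s => (∑ j ∈ Finset.range (N+1), (1:ℝ)/2 * a j s ^ 2)
              + (1:ℝ)/2 * a (N+1) s ^ 2 := by
          funext s; rw [Finset.sum_range_succ]
        rw [hfun]
        refine h2.congr_deriv ?_
        rw [Finset.sum_range_succ _ (N+1)]
        push_cast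
        ring
  -- uniform bound on the partial derivatives
  set B : ℝ := (∑' j : ℕ, |f j| * (Real.sqrt M * r ^ j)) + Real.sqrt M * M with hB
  have hbound : ∀ N : ℕ, ∀ u ∈ Set.Icc T₁ T₂,
      |(∑ j ∈ Finset.range (N+1), f j * a j u) - l ^ N * a N u ^ 2 * a (N+1) u| ≤ B := by
    intro N u hu
    have hs1 : |∑ j ∈ Finset.range (N+1), f j * a j u|
        ≤ ∑' j : ℕ, |f j| * (Real.sqrt M * r ^ j) := by
      calc |∑ j ∈ Finset.range (N+1), f j * a j u|
          ≤ ∑ j ∈ Finset.range (N+1), |f j * a j u| := Finset.abs_sum_le_sum_abs _ _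
        _ ≤ ∑ j ∈ Finset.range (N+1), |f j| * (Real.sqrt M * r ^ j) := by
            refine Finset.sum_le_sum fun j _ => ?_
            rw [abs_mul]
            exact mul_le_mul_of_nonneg_left (habs u hu j) (abs_nonneg _)
        _ ≤ ∑' j : ℕ, |f j| * (Real.sqrt M * r ^ j) :=
            Summable.sum_le_tsum _ (fun j _ => by positivity) hu_sum
    have hs2 : |l ^ N * a N u ^ 2 * a (N+1) u| ≤ Real.sqrt M * M := by
      rw [abs_mul, abs_mul, abs_of_nonneg (by positivity : (0:ℝ) ≤ l ^ N),
        abs_of_nonneg (sq_nonneg (a N u))]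
      calc l ^ N * a N u ^ 2 * |a (N+1) u|
          ≤ l ^ N * (M * r ^ (2*N)) * (Real.sqrt M * r ^ (N+1)) := by
            have h1 := hsq_le u hu N
            have h2 := habs u hu (N+1)
            have h3 : (0:ℝ) ≤ l ^ N := by positivity
            have h4 : (0:ℝ) ≤ a N u ^ 2 := sq_nonneg _
            gcongr
        _ = (l * r^2 * r) ^ N * (M * Real.sqrt M * r) := by ring
        _ = M * Real.sqrt M * r := by rw [key, one_pow, one_mul]
        _ ≤ Real.sqrt M * M := by nlinarith [mul_nonneg hM0 (Real.sqrt_nonneg M)]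
    calc |(∑ j ∈ Finset.range (N+1), f j * a j u) - l ^ N * a N u ^ 2 * a (N+1) u|
        ≤ |∑ j ∈ Finset.range (N+1), f j * a j u| + |l ^ N * a N u ^ 2 * a (N+1) u| :=
          abs_sub _ _
      _ ≤ B := add_le_add hs1 hs2
  -- continuity of partial derivatives
  have hgNcont : ∀ N : ℕ, ContinuousOn
      (fun u => (∑ j ∈ Finset.range (N+1), f j * a j u) - l ^ N * a N u ^ 2 * a (N+1) u)
      (Set.Icc T₁ T₂) := by
    intro N
    exact (continuousOn_finset_sum _ fun j _ => continuousOn_const.mul (hcont j)).sub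
      (((continuousOn_const.mul ((hcont N).pow 2)).mul (hcont (N+1))))
  -- FTC for partial energies
  have hFTC : ∀ N : ℕ, ∀ s ∈ Set.Icc T₁ T₂,
      (∑ j ∈ Finset.range (N+1), (1:ℝ)/2 * a j s ^ 2)
        - (∑ j ∈ Finset.range (N+1), (1:ℝ)/2 * a j T₁ ^ 2)
      = ∫ u in T₁..s,
          ((∑ j ∈ Finset.range (N+1), f j * a j u) - l ^ N * a N u ^ 2 * a (N+1) u) := by
    intro N s hs
    have hsub : Set.uIcc T₁ s ⊆ Set.Icc T₁ T₂ := by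
      rw [Set.uIcc_of_le hs.1]
      exact Set.Icc_subset_Icc le_rfl hs.2
    exact (intervalIntegral.integral_eq_sub_of_hasDerivAt
      (fun u hu => hEN N u (hsub hu))
      (((hgNcont N).mono hsub).intervalIntegrable)).symm
  -- the energy identity in integral form
  have hE : ∀ s ∈ Set.Icc T₁ T₂,
      (1:ℝ)/2 * (∑' j : ℕ, a j s ^ 2) - (1:ℝ)/2 * (∑' j : ℕ, a j T₁ ^ 2)
        = ∫ u in T₁..s, g u := by
    intro s hs
    have hLs : Tendsto (fun N => ∑ j ∈ Finset.range (N+1), (1:ℝ)/2 * a j s ^ 2)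
        atTop (𝓝 ((1:ℝ)/2 * ∑' j : ℕ, a j s ^ 2)) := by
      have h := ((hsq_sum s hs).mul_left ((1:ℝ)/2)).hasSum.tendsto_sum_nat
      rw [tsum_mul_left] at h
      exact h.comp (tendsto_add_atTop_nat 1)
    have hLT : Tendsto (fun N => ∑ j ∈ Finset.range (N+1), (1:ℝ)/2 * a j T₁ ^ 2)
        atTop (𝓝 ((1:ℝ)/2 * ∑' j : ℕ, a j T₁ ^ 2)) := by
      have h := ((hsq_sum T₁ hT₁).mul_left ((1:ℝ)/2)).hasSum.tendsto_sum_nat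
      rw [tsum_mul_left] at h
      exact h.comp (tendsto_add_atTop_nat 1)
    have hL := hLs.sub hLT
    have hIoc : Set.uIoc T₁ s ⊆ Set.Icc T₁ T₂ := by
      rw [Set.uIoc_of_le hs.1]
      exact le_trans Set.Ioc_subset_Icc_self (Set.Icc_subset_Icc le_rfl hs.2)
    have hsub : Set.uIcc T₁ s ⊆ Set.Icc T₁ T₂ := by
      rw [Set.uIcc_of_le hs.1]
      exact Set.Icc_subset_Icc le_rfl hs.2
    have hR : Tendsto (fun N => ∫ u in T₁..s,
        ((∑ j ∈ Finset.range (N+1), f j * a j u) - l ^ N * a N u ^ 2 * a (N+1) u))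
        atTop (𝓝 (∫ u in T₁..s, g u)) := by
      refine intervalIntegral.tendsto_integral_filter_of_dominated_convergence
        (fun _ => B) ?_ ?_ ?_ ?_
      · exact Eventually.of_forall fun N =>
          (((hgNcont N).mono hIoc)).aestronglyMeasurable measurableSet_uIoc
      · exact Eventually.of_forall fun N =>
          Eventually.of_forall fun x hx => by
            rw [Real.norm_eq_abs]; exact hbound N x (hIoc hx)
      · exact intervalIntegrable_const
      · refine Eventually.of_forall fun x hx => ?_
        have hxI : x ∈ Set.Icc T₁ T₂ := hIoc hx
        have hsum1 : Tendsto (fun N => ∑ j ∈ Finset.range (N+1), f j * a j x)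
            atTop (𝓝 (g x)) :=
          ((hfa_sum x hxI).hasSum.tendsto_sum_nat).comp (tendsto_add_atTop_nat 1)
        have hz : Tendsto (fun N : ℕ => l ^ N * a N x ^ 2 * a (N+1) x) atTop (𝓝 0) := by
          have heps : Tendsto (fun N : ℕ => (2:ℝ) ^ ((5:ℝ)/3 * N) * a N x ^ 2)
              atTop (𝓝 0) := (hsum x hxI).tendsto_atTop_zero
          have hbnd : ∀ N : ℕ, ‖l ^ N * a N x ^ 2 * a (N+1) x‖
              ≤ Real.sqrt M * r * ((2:ℝ) ^ ((5:ℝ)/3 * N) * a N x ^ 2) := by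
            intro N
            rw [Real.norm_eq_abs, abs_mul, abs_mul,
              abs_of_nonneg (by positivity : (0:ℝ) ≤ l ^ N),
              abs_of_nonneg (sq_nonneg (a N x))]
            calc l ^ N * a N x ^ 2 * |a (N+1) x|
                ≤ l ^ N * (r ^ (2*N) * ((2:ℝ) ^ ((5:ℝ)/3 * N) * a N x ^ 2))
                  * (Real.sqrt M * r ^ (N+1)) := by
                  rw [← hsq_eq]
                  have h2 := habs x hxI (N+1)
                  have h3 : (0:ℝ) ≤ l ^ N * a N x ^ 2 := by positivity
                  exact mul_le_mul_of_nonneg_left h2 h3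
              _ = (l * r^2 * r) ^ N
                  * (Real.sqrt M * r * ((2:ℝ) ^ ((5:ℝ)/3 * N) * a N x ^ 2)) := by ring
              _ = Real.sqrt M * r * ((2:ℝ) ^ ((5:ℝ)/3 * N) * a N x ^ 2) := by
                  rw [key, one_pow, one_mul]
          have hlim0 : Tendsto (fun N : ℕ =>
              Real.sqrt M * r * ((2:ℝ) ^ ((5:ℝ)/3 * N) * a N x ^ 2)) atTop (𝓝 0) := by
            have := heps.const_mul (Real.sqrt M * r)
            simpa using this
          exact squeeze_zero_norm hbnd hlim0
        have := hsum1.sub hz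
        simpa using this
    have hfunEq : (fun N => (∑ j ∈ Finset.range (N+1), (1:ℝ)/2 * a j s ^ 2)
          - (∑ j ∈ Finset.range (N+1), (1:ℝ)/2 * a j T₁ ^ 2))
        = (fun N => ∫ u in T₁..s,
          ((∑ j ∈ Finset.range (N+1), f j * a j u) - l ^ N * a N u ^ 2 * a (N+1) u)) := by
      funext N; exact hFTC N s hs
    rw [hfunEq] at hL
    exact tendsto_nhds_unique hL hR
  -- conclusion
  intro t ht
  have htIcc : t ∈ Set.Icc T₁ T₂ := ⟨ht.1.le, ht.2.le⟩
  have hnhds : Set.Icc T₁ T₂ ∈ nhds t := Icc_mem_nhds ht.1 ht.2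
  have hint : IntervalIntegrable g volume T₁ t := by
    refine (hgcont.mono ?_).intervalIntegrable
    rw [Set.uIcc_of_le ht.1.le]
    exact Set.Icc_subset_Icc le_rfl ht.2.le
  have hmeas : StronglyMeasurableAtFilter g (nhds t) volume :=
    ContinuousOn.stronglyMeasurableAtFilter isOpen_Ioo
      (hgcont.mono Set.Ioo_subset_Icc_self) t ht
  have hct : ContinuousAt g t := (hgcont t htIcc).continuousAt hnhds
  have hD : HasDerivAt (fun s => ∫ u in T₁..s, g u) (g t) t :=
    intervalIntegral.integral_hasDerivAt_right hint hmeas hct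
  have hD' : HasDerivAt
      (fun s => (1:ℝ)/2 * (∑' j : ℕ, a j T₁ ^ 2) + ∫ u in T₁..s, g u) (g t) t :=
    hD.const_add _
  refine hD'.congr_of_eventuallyEq ?_
  filter_upwards [hnhds] with s hs
  have := hE s hs
  linarith
end

section
/- Let a(t) be a solution of the dyadic model with force f = (λ^{-1/3},0,0,...) that is regular (bounded H^{5/6} norm) on [T₁,T₂], and set b_j(t) = a_j(t) - λ^{-j/3}. Then ||b(T₂)||_{l²} - ||b(T₁)||_{l²} ≤ -(1/2)λ^{-1/3}(T₂ - T₁). In particular every regular solution approaches the fixed point in l² at least linearly in time. -/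
open Real

open Finset Filter MeasureTheory



set_option maxHeartbeats 1600000 in
lemma gronwall_linear_decay (T₁ T₂ c : ℝ) (hT : T₁ ≤ T₂) (hc : 0 < c)
    (g D : ℝ → ℝ)
    (hg : ContinuousOn g (Set.Icc T₁ T₂))
    (hg0 : ∀ t ∈ Set.Icc T₁ T₂, 0 ≤ g t)
    (hD1 : ∀ t ∈ Set.Icc T₁ T₂, 1 ≤ D t)
    (hDg : ∀ t ∈ Set.Icc T₁ T₂, g t ≤ D t)
    (hDint : IntervalIntegrable D MeasureTheory.volume T₁ T₂)
    (key : ∀ t t', T₁ ≤ t → t ≤ t' → t' ≤ T₂ →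
      g t' ^ 2 - g t ^ 2 ≤ -c * ∫ s in t..t', D s) :
    g T₂ - g T₁ ≤ -(c/2) * (T₂ - T₁) := by
  -- reduce to ε-version
  rcases eq_or_lt_of_le hT with rfl | hTlt
  · simp
  have hτ : 0 < T₂ - T₁ := by linarith
  have main : ∀ ε : ℝ, 0 < ε → g T₂ - g T₁ ≤ -(c/2 - ε) * (T₂ - T₁) := by
    intro ε hε
    set A : Set ℝ := Set.Icc T₁ T₂ ∩ (fun t => g t + (c/2 - ε) * (t - T₁) - g T₁) ⁻¹' Set.Iic 0
      with hA_def
    have hmemA : ∀ t, t ∈ A ↔ (t ∈ Set.Icc T₁ T₂ ∧ g t - g T₁ ≤ -(c/2 - ε) * (t - T₁)) := by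
      intro t
      constructor
      · rintro ⟨h1, h2⟩
        simp only [Set.mem_preimage, Set.mem_Iic] at h2
        exact ⟨h1, by linarith⟩
      · rintro ⟨h1, h2⟩
        refine ⟨h1, ?_⟩
        simp only [Set.mem_preimage, Set.mem_Iic]
        linarith
    have hAclosed : IsClosed A := by
      apply ContinuousOn.preimage_isClosed_of_isClosed _ isClosed_Icc isClosed_Iic
      exact (hg.add (by fun_prop)).sub continuousOn_const
    have hT₁A : T₁ ∈ A := by
      rw [hmemA]
      exact ⟨⟨le_refl _, hT⟩, by simp⟩
    have hAne : A.Nonempty := ⟨T₁, hT₁A⟩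
    have hAbdd : BddAbove A := BddAbove.mono (fun t ht => ht.1) bddAbove_Icc
    set s₀ := sSup A with hs₀_def
    have hs₀A : s₀ ∈ A := hAclosed.csSup_mem hAne hAbdd
    have hs₀ub : ∀ x ∈ A, x ≤ s₀ := fun x hx => le_csSup hAbdd hx
    clear_value s₀
    have hs₀Icc : s₀ ∈ Set.Icc T₁ T₂ := ((hmemA s₀).1 hs₀A).1
    -- claim s₀ = T₂
    by_cases hs₀T₂ : s₀ = T₂
    · have := (hmemA s₀).1 hs₀A
      rw [hs₀T₂] at this
      linarith [this.2]
    · exfalso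
      have hs₀lt : s₀ < T₂ := lt_of_le_of_ne hs₀Icc.2 hs₀T₂
      -- continuity at s₀ within Icc
      have hcont : ContinuousWithinAt g (Set.Icc T₁ T₂) s₀ := hg s₀ hs₀Icc
      have hη : (0:ℝ) < 2 * ε / c := by positivity
      obtain ⟨δ₁, hδ₁pos, hδ₁⟩ := Metric.continuousWithinAt_iff.1 hcont (2 * ε / c) hη
      have hex : ∃ δ : ℝ, 0 < δ ∧ δ ≤ δ₁/2 ∧ δ ≤ T₂ - s₀ ∧ δ ≤ 1/c := by
        refine ⟨min (min (δ₁/2) (1/c)) (T₂ - s₀), ?_, ?_, ?_, ?_⟩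
        · exact lt_min (lt_min (by linarith) (by positivity)) (by linarith)
        · exact le_trans (min_le_left (min (δ₁/2) (1/c)) (T₂ - s₀))
            (min_le_left (δ₁/2) (1/c))
        · exact min_le_right _ _
        · exact le_trans (min_le_left (min (δ₁/2) (1/c)) (T₂ - s₀))
            (min_le_right (δ₁/2) (1/c))
      obtain ⟨δ, hδpos, hδd1, hδT, h7⟩ := hex
      have hδc : c * δ ≤ 1 := by
        rw [div_eq_mul_inv] at h7
        calc c * δ ≤ c * (1 * c⁻¹) := by nlinarith
        _ = 1 := by field_simp
      obtain ⟨t', ht'_def⟩ : ∃ t' : ℝ, t' = s₀ + δ := ⟨_, rfl⟩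
      have ht'Icc : t' ∈ Set.Icc T₁ T₂ := by
        constructor
        · have := hs₀Icc.1; rw [ht'_def]; linarith
        · rw [ht'_def]; linarith
      -- the key estimate on [s₀, t']
      have hkey := key s₀ t' hs₀Icc.1 (by rw [ht'_def]; linarith) ht'Icc.2
      have hintsub : IntervalIntegrable D MeasureTheory.volume s₀ t' := by
        apply hDint.mono_set
        rw [Set.uIcc_of_le (by linarith : s₀ ≤ t'), Set.uIcc_of_le hT]
        exact Set.Icc_subset_Icc hs₀Icc.1 ht'Icc.2
      have hsubIcc : Set.Icc s₀ t' ⊆ Set.Icc T₁ T₂ :=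
        Set.Icc_subset_Icc hs₀Icc.1 ht'Icc.2
      have hG0 : 0 ≤ g s₀ := hg0 s₀ hs₀Icc
      have hgt'0 : 0 ≤ g t' := hg0 t' ht'Icc
      -- show g t' ≤ g s₀ - (c/2 - ε) * δ
      have hstep : g t' ≤ g s₀ - (c/2 - ε) * δ := by
        by_cases hcase : g s₀ ≤ 1
        · -- use D ≥ 1
          have hint1 : δ ≤ ∫ s in s₀..t', D s := by
            have : ∫ s in s₀..t', (1:ℝ) = δ := by
              rw [ht'_def]; simp
            rw [← this]
            apply intervalIntegral.integral_mono_on (by linarith) (by simp) hintsub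
            intro x hx
            exact hD1 x (hsubIcc hx)
          have h2 : g t' ^ 2 ≤ g s₀ ^ 2 - c * δ := by nlinarith
          have hG2 : c * δ ≤ g s₀ ^ 2 := by nlinarith [sq_nonneg (g t')]
          have hGsq : g s₀ ^ 2 ≤ g s₀ := by nlinarith
          have hcd2 : c * δ / 2 ≤ g s₀ := by
            have : 0 < c * δ := mul_pos hc hδpos
            linarith
          have hmulle : c * δ * g s₀ ≤ c * δ := by
            have : 0 < c * δ := mul_pos hc hδpos
            nlinarith
          have expand : (g s₀ - c*δ/2)^2 = g s₀^2 - c*δ*g s₀ + (c*δ/2)^2 := by ring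
          have h3 : g t' ^ 2 ≤ (g s₀ - c * δ / 2)^2 := by
            nlinarith [sq_nonneg (c*δ/2)]
          have h4 : g t' ≤ g s₀ - c * δ / 2 := by
            nlinarith [h3, hcd2, hgt'0]
          nlinarith [mul_pos hε hδpos]
        · push_neg at hcase
          -- g ≥ g s₀ - η on [s₀, t']
          have hglb : ∀ x ∈ Set.Icc s₀ t', g s₀ - 2*ε/c ≤ D x := by
            intro x hx
            have hxI : x ∈ Set.Icc T₁ T₂ := hsubIcc hx
            have hdist : dist x s₀ < δ₁ := by
              rw [Real.dist_eq, abs_lt]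
              have h1 : δ ≤ δ₁/2 := hδd1
              have h8 := hx.1
              have h9 := hx.2
              rw [ht'_def] at h9
              constructor <;> linarith
            have := hδ₁ hxI hdist
            rw [Real.dist_eq, abs_lt] at this
            have := hDg x hxI
            linarith [this]
          have hint2 : δ * (g s₀ - 2*ε/c) ≤ ∫ s in s₀..t', D s := by
            have heq : ∫ s in s₀..t', (g s₀ - 2*ε/c) = δ * (g s₀ - 2*ε/c) := by
              rw [ht'_def]; simp; ring
            rw [← heq]
            apply intervalIntegral.integral_mono_on (by linarith) (by simp) hintsub
            exact hglb
          have h2 : g t' ^ 2 ≤ g s₀ ^ 2 - c * δ * (g s₀ - 2*ε/c) := by nlinarith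
          have e2 : c * δ * (g s₀ - 2*ε/c) = c * δ * g s₀ - 2*ε*δ := by
            field_simp
          have h2' : g t' ^ 2 ≤ g s₀ ^ 2 - c * δ * g s₀ + 2*ε*δ := by linarith
          have hRnn : 0 ≤ g s₀ - (c/2 - ε) * δ := by
            by_cases hce : c/2 - ε ≤ 0
            · nlinarith
            · push_neg at hce
              have h5 : (c/2 - ε) * δ ≤ (c/2) * δ := by nlinarith
              have h6 : c * δ ≤ 1 := hδc
              linarith
          have expand : (g s₀ - (c/2 - ε) * δ)^2
              = g s₀ ^2 - c * δ * g s₀ + 2*ε*δ*(g s₀ - 1) + 2*ε*δ + ((c/2-ε)*δ)^2 := by ring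
          have e1 : 0 ≤ 2*ε*δ*(g s₀ - 1) := by
            have : 0 < ε * δ := mul_pos hε hδpos
            nlinarith
          have h3 : g t' ^ 2 ≤ (g s₀ - (c/2 - ε) * δ)^2 := by
            linarith [sq_nonneg ((c/2-ε)*δ)]
          nlinarith [h3, hRnn, hgt'0]
      -- t' ∈ A, contradiction
      have ht'A : t' ∈ A := by
        rw [hmemA]
        refine ⟨ht'Icc, ?_⟩
        have hs₀ineq := ((hmemA s₀).1 hs₀A).2
        have : t' - T₁ = (s₀ - T₁) + δ := by rw [ht'_def]; ring
        rw [this]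
        have : -(c/2 - ε) * ((s₀ - T₁) + δ) = -(c/2-ε)*(s₀ - T₁) + (-(c/2-ε)*δ) := by ring
        rw [this]
        linarith
      have : t' ≤ s₀ := hs₀ub t' ht'A
      rw [ht'_def] at this
      linarith
  -- let ε → 0
  by_contra hcon
  push_neg at hcon
  set X := g T₂ - g T₁ + (c/2) * (T₂ - T₁) with hX
  have hXpos : 0 < X := by simp only [hX]; linarith
  have := main (X / (2 * (T₂ - T₁))) (by positivity)
  have hexp : -(c / 2 - X / (2 * (T₂ - T₁))) * (T₂ - T₁)
      = -(c/2) * (T₂ - T₁) + X/2 := by field_simp; ring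
  rw [hexp] at this
  simp only [hX] at this hXpos
  linarith


set_option maxHeartbeats 1600000 in
lemma dyadic_sum_identity (l : ℝ) (hl0 : 0 < l) (a d : ℕ → ℝ)
    (hd0 : d 0 = -(a 0 * a 1) + l ^ (-(1:ℝ)/3))
    (hdj : ∀ j : ℕ, d (j+1) = l ^ (((j:ℝ)+1) - 1) * a j ^ 2
      - l ^ ((j:ℝ)+1) * a (j+1) * a (j+2)) :
    ∀ N : ℕ, ∑ j ∈ Finset.range (N+1), 2 * (a j - l ^ (-(j:ℝ)/3)) * d j
      = -(l ^ (-(1:ℝ)/3)) * ((a 0 - 1)^2 + (l ^ ((N:ℝ)/3) * a N - 1)^2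
        + (∑ j ∈ Finset.range N, (l ^ (((j:ℝ)+1)/3) * a (j+1) - l ^ ((j:ℝ)/3) * a j)^2)
        + 2 * (l ^ ((N:ℝ)/3) * a N) * (l ^ ((N:ℝ)/3) * a N - 1)
          * (l ^ (((N:ℝ)+1)/3) * a (N+1) - 1)) := by
  have hlne : l ≠ 0 := ne_of_gt hl0
  have hadd : ∀ x y : ℝ, l ^ (x+y) = l^x * l^y := fun x y => Real.rpow_add hl0 x y
  have hneg : ∀ x : ℝ, l ^ (-x) = (l^x)⁻¹ := fun x => Real.rpow_neg hl0.le x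
  have hcube : ∀ x : ℝ, l ^ (3*x) = (l ^ x)^3 := fun x => by
    rw [← Real.rpow_natCast (l^x) 3, ← Real.rpow_mul hl0.le]
    norm_num [mul_comm]
  have hrpos : ∀ x : ℝ, 0 < l ^ x := fun x => Real.rpow_pos_of_pos hl0 x
  intro N
  induction N with
  | zero =>
    rw [Finset.sum_range_one, hd0]
    have e0 : (-(0:ℝ))/3 = 0 := by norm_num
    have e1 : ((0:ℕ):ℝ)/3 = 0 := by norm_num
    have e2 : -((0:ℕ):ℝ)/3 = 0 := by norm_num
    have e3 : (((0:ℕ):ℝ)+1)/3 = 1/3 := by norm_num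
    have e4 : -(1:ℝ)/3 = -(1/3) := by norm_num
    rw [e2, e3, e4, hneg, e1, Real.rpow_zero]
    simp only [Finset.range_zero, Finset.sum_empty]
    have hr := hrpos (1/3)
    have hrne : l ^ ((1:ℝ)/3) ≠ 0 := ne_of_gt hr
    field_simp
    ring
  | succ N ih =>
    rw [Finset.sum_range_succ, ih, hdj N, Finset.sum_range_succ]
    have hc1 : ((N+1:ℕ):ℝ) = (N:ℝ) + 1 := by push_cast; ring
    have hc2 : ((N+2:ℕ):ℝ) = (N:ℝ) + 2 := by push_cast; ring
    rw [hc1]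
    have eP : l ^ (((N:ℝ)+1) - 1) = (l ^ ((N:ℝ)/3))^3 := by
      have : ((N:ℝ)+1) - 1 = 3 * ((N:ℝ)/3) := by ring
      rw [this, hcube]
    have ePr3 : l ^ ((N:ℝ)+1) = (l ^ ((N:ℝ)/3) * l ^ ((1:ℝ)/3))^3 := by
      have : ((N:ℝ)+1) = 3 * ((N:ℝ)/3 + 1/3) := by ring
      rw [this, hcube, hadd]
    have ePr : l ^ (((N:ℝ)+1)/3) = l ^ ((N:ℝ)/3) * l ^ ((1:ℝ)/3) := by
      rw [show ((N:ℝ)+1)/3 = (N:ℝ)/3 + 1/3 by ring, hadd]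
    have ePr2 : l ^ (((N:ℝ)+1+1)/3) = l ^ ((N:ℝ)/3) * l ^ ((1:ℝ)/3) * l ^ ((1:ℝ)/3) := by
      rw [show ((N:ℝ)+1+1)/3 = ((N:ℝ)/3 + 1/3) + 1/3 by ring, hadd, hadd]
    have ePrinv : l ^ (-((N:ℝ)+1)/3) = (l ^ ((N:ℝ)/3) * l ^ ((1:ℝ)/3))⁻¹ := by
      rw [show -((N:ℝ)+1)/3 = -(((N:ℝ)+1)/3) by ring, hneg, ePr]
    have ecinv : l ^ (-(1:ℝ)/3) = (l ^ ((1:ℝ)/3))⁻¹ := by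
      rw [show -(1:ℝ)/3 = -((1:ℝ)/3) by ring, hneg]
    rw [show N+1+1 = N+2 from rfl, eP, ePr3, ePr, ePr2, ePrinv, ecinv]
    have hPne : l ^ ((N:ℝ)/3) ≠ 0 := ne_of_gt (hrpos _)
    have hrne : l ^ ((1:ℝ)/3) ≠ 0 := ne_of_gt (hrpos _)
    field_simp
    ring


noncomputable def dyadicQ (l : ℝ) (A : ℕ → ℝ) : ℝ :=
  ∑' j : ℕ, (l ^ (((j:ℝ)+1)/3) * A (j+1) - l ^ ((j:ℝ)/3) * A j)^2

lemma wsq_eq (l : ℝ) (hl : l = (2:ℝ)^((5:ℝ)/2)) (j : ℕ) (x : ℝ) :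
    (l ^ ((j:ℝ)/3) * x)^2 = (2:ℝ) ^ ((5:ℝ)/3 * (j:ℝ)) * x^2 := by
  have key : (l ^ ((j:ℝ)/3))^(2:ℕ) = (2:ℝ) ^ ((5:ℝ)/3 * (j:ℝ)) := by
    subst hl
    rw [← Real.rpow_natCast (((2:ℝ)^((5:ℝ)/2)) ^ ((j:ℝ)/3)) 2,
      ← Real.rpow_mul (by positivity), ← Real.rpow_mul (by norm_num)]
    norm_num
    rw [show (5:ℝ)/2 * ((j:ℝ)/3 * 2) = 5/3*(j:ℝ) by ring]
  calc (l ^ ((j:ℝ)/3) * x)^2 = (l ^ ((j:ℝ)/3))^(2:ℕ) * x^2 := by ring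
  _ = (2:ℝ) ^ ((5:ℝ)/3 * (j:ℝ)) * x^2 := by rw [key]

lemma delta_summable (l : ℝ) (hl : l = (2:ℝ)^((5:ℝ)/2)) (A : ℕ → ℝ)
    (hs : Summable (fun j : ℕ => (2:ℝ)^((5:ℝ)/3*(j:ℝ)) * A j^2)) :
    Summable (fun j : ℕ => (l ^ (((j:ℝ)+1)/3) * A (j+1) - l ^ ((j:ℝ)/3) * A j)^2) := by
  have hs1 : Summable (fun j : ℕ => (2:ℝ)^((5:ℝ)/3*((j:ℝ)+1)) * A (j+1)^2) := by
    have := (summable_nat_add_iff 1).2 hs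
    refine this.congr fun j => ?_
    push_cast
    ring_nf
  apply Summable.of_nonneg_of_le (fun j => sq_nonneg _)
    (fun j => ?_) ((hs1.mul_left 2).add (hs.mul_left 2))
  have e1 : (l ^ (((j:ℝ)+1)/3) * A (j+1))^2 = (2:ℝ)^((5:ℝ)/3*((j:ℝ)+1)) * A (j+1)^2 := by
    have := wsq_eq l hl (j+1) (A (j+1))
    push_cast at this
    exact this
  have e2 := wsq_eq l hl j (A j)
  nlinarith [sq_nonneg (l ^ (((j:ℝ)+1)/3) * A (j+1) + l ^ ((j:ℝ)/3) * A j)]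

lemma x_facts (l : ℝ) (hl : l = (2:ℝ)^((5:ℝ)/2)) :
    0 < l ^ (-(2:ℝ)/3) ∧ l ^ (-(2:ℝ)/3) ≤ 1/3 := by
  have hl0 : 0 < l := by rw [hl]; positivity
  constructor
  · exact Real.rpow_pos_of_pos hl0 _
  · have h23 : l ^ ((2:ℝ)/3) = (2:ℝ) ^ ((5:ℝ)/3) := by
      rw [hl, ← Real.rpow_mul (by norm_num)]
      norm_num
    have hcube : ((2:ℝ) ^ ((5:ℝ)/3))^(3:ℕ) = 32 := by
      rw [← Real.rpow_natCast ((2:ℝ)^((5:ℝ)/3)) 3, ← Real.rpow_mul (by norm_num)]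
      norm_num
    have hpos : (0:ℝ) < (2:ℝ) ^ ((5:ℝ)/3) := by positivity
    have h3 : (3:ℝ) ≤ (2:ℝ) ^ ((5:ℝ)/3) := by
      nlinarith [hcube, hpos, sq_nonneg ((2:ℝ) ^ ((5:ℝ)/3) - 3),
        sq_nonneg ((2:ℝ) ^ ((5:ℝ)/3) + 3), mul_pos hpos hpos]
    have : l ^ (-(2:ℝ)/3) = (l ^ ((2:ℝ)/3))⁻¹ := by
      rw [show -(2:ℝ)/3 = -((2:ℝ)/3) by ring, Real.rpow_neg hl0.le]
    rw [this, h23]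
    rw [inv_le_comm₀ (by positivity) (by norm_num)]
    simpa using h3

lemma bsq_eq (l : ℝ) (hl : l = (2:ℝ)^((5:ℝ)/2)) (j : ℕ) (x : ℝ) :
    (x - l ^ (-(j:ℝ)/3))^2 = (l ^ (-(2:ℝ)/3))^j * (l ^ ((j:ℝ)/3) * x - 1)^2 := by
  have hl0 : 0 < l := by rw [hl]; positivity
  have hu : 0 < l ^ ((j:ℝ)/3) := Real.rpow_pos_of_pos hl0 _
  have e1 : (l ^ (-(2:ℝ)/3))^j = (l ^ ((j:ℝ)/3) * l ^ ((j:ℝ)/3))⁻¹ := by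
    rw [← Real.rpow_natCast (l ^ (-(2:ℝ)/3)) j, ← Real.rpow_mul hl0.le,
      ← Real.rpow_add hl0]
    rw [show -(2:ℝ)/3 * (j:ℝ) = -((j:ℝ)/3 + (j:ℝ)/3) by ring, Real.rpow_neg hl0.le]
  have e2 : l ^ (-(j:ℝ)/3) = (l ^ ((j:ℝ)/3))⁻¹ := by
    rw [show -(j:ℝ)/3 = -((j:ℝ)/3) by ring, Real.rpow_neg hl0.le]
  rw [e1, e2]
  field_simp

set_option maxHeartbeats 1000000 in
lemma dyadic_norm_bound (l : ℝ) (hl : l = (2:ℝ)^((5:ℝ)/2)) (A : ℕ → ℝ)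
    (hs : Summable (fun j : ℕ => (2:ℝ)^((5:ℝ)/3*(j:ℝ)) * A j^2)) :
    Real.sqrt (∑' j : ℕ, (A j - l ^ (-(j:ℝ)/3))^2)
      ≤ 1 + (A 0 - 1)^2 + dyadicQ l A := by
  have hl0 : 0 < l := by rw [hl]; positivity
  obtain ⟨hx0, hx13⟩ := x_facts l hl
  set x := l ^ (-(2:ℝ)/3) with hx_def
  have hx1 : x < 1 := lt_of_le_of_lt hx13 (by norm_num)
  set Q := dyadicQ l A with hQ_def
  set A₀ := (A 0 - 1)^2 with hA₀_def
  have hΔsum : Summable (fun j : ℕ =>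
      (l ^ (((j:ℝ)+1)/3) * A (j+1) - l ^ ((j:ℝ)/3) * A j)^2) := delta_summable l hl A hs
  have hQ0 : 0 ≤ Q := tsum_nonneg (fun j => sq_nonneg _)
  have hA₀0 : 0 ≤ A₀ := sq_nonneg _
  -- pointwise bound on (w j - 1)^2
  have hv_le : ∀ j : ℕ, (l ^ ((j:ℝ)/3) * A j - 1)^2 ≤ 2*A₀ + 2*(j:ℝ)*Q := by
    intro j
    have htel0 := Finset.sum_range_sub (f := fun i => l ^ ((i:ℝ)/3) * A i) j
    have htel : ∑ i ∈ Finset.range j,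
        (l ^ (((i:ℝ)+1)/3) * A (i+1) - l ^ ((i:ℝ)/3) * A i)
        = l ^ ((j:ℝ)/3) * A j - A 0 := by
      have hcongr : ∑ i ∈ Finset.range j,
          (l ^ (((i:ℝ)+1)/3) * A (i+1) - l ^ ((i:ℝ)/3) * A i)
          = ∑ i ∈ Finset.range j,
            (l ^ ((↑(i+1):ℝ)/3) * A (i+1) - l ^ ((i:ℝ)/3) * A i) := by
        apply Finset.sum_congr rfl
        intro i _
        push_cast
        ring_nf
      rw [hcongr, htel0]
      norm_num
    set S := ∑ i ∈ Finset.range j,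
        (l ^ (((i:ℝ)+1)/3) * A (i+1) - l ^ ((i:ℝ)/3) * A i) with hS_def
    have hCS : S^2 ≤ (j:ℝ) * ∑ i ∈ Finset.range j,
        (l ^ (((i:ℝ)+1)/3) * A (i+1) - l ^ ((i:ℝ)/3) * A i)^2 := by
      have hCS' := sq_sum_le_card_mul_sum_sq
        (s := Finset.range j)
        (f := fun i => l ^ (((i:ℝ)+1)/3) * A (i+1) - l ^ ((i:ℝ)/3) * A i)
      rw [Finset.card_range] at hCS'
      rw [hS_def]
      exact_mod_cast hCS'
    have hsum_le : ∑ i ∈ Finset.range j,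
        (l ^ (((i:ℝ)+1)/3) * A (i+1) - l ^ ((i:ℝ)/3) * A i)^2 ≤ Q :=
      Summable.sum_le_tsum _ (fun i _ => sq_nonneg _) hΔsum
    have hS2 : S^2 ≤ (j:ℝ) * Q := by
      calc S^2 ≤ (j:ℝ) * ∑ i ∈ Finset.range j,
          (l ^ (((i:ℝ)+1)/3) * A (i+1) - l ^ ((i:ℝ)/3) * A i)^2 := hCS
      _ ≤ (j:ℝ) * Q := by
          apply mul_le_mul_of_nonneg_left hsum_le (Nat.cast_nonneg j)
    have hexp : l ^ ((j:ℝ)/3) * A j - 1 = (A 0 - 1) + S := by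
      rw [htel]; ring
    rw [hexp]
    nlinarith [sq_nonneg ((A 0 - 1) - S)]
  -- summability of the dominating series
  have hgeo : Summable (fun j : ℕ => x ^ j) := summable_geometric_of_lt_one hx0.le hx1
  have hjgeo : Summable (fun j : ℕ => (j:ℝ) * x ^ j) := by
    have := summable_pow_mul_geometric_of_norm_lt_one (R := ℝ) 1
      (r := x) (by rw [Real.norm_eq_abs, abs_of_pos hx0]; exact hx1)
    refine this.congr fun j => by ring
  have hdom : Summable (fun j : ℕ => x ^ j * (2*A₀ + 2*(j:ℝ)*Q)) := by
    have : (fun j : ℕ => x ^ j * (2*A₀ + 2*(j:ℝ)*Q))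
        = fun j : ℕ => (2*A₀) * x ^ j + (2*Q) * ((j:ℝ) * x ^ j) := by
      funext j; ring
    rw [this]
    exact (hgeo.mul_left _).add (hjgeo.mul_left _)
  have hble : ∀ j : ℕ, (A j - l ^ (-(j:ℝ)/3))^2 ≤ x ^ j * (2*A₀ + 2*(j:ℝ)*Q) := by
    intro j
    rw [bsq_eq l hl j (A j)]
    apply mul_le_mul_of_nonneg_left (hv_le j) (pow_nonneg hx0.le j)
  have hbsum : Summable (fun j : ℕ => (A j - l ^ (-(j:ℝ)/3))^2) :=
    Summable.of_nonneg_of_le (fun j => sq_nonneg _) hble hdom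
  have htsum_le : (∑' j : ℕ, (A j - l ^ (-(j:ℝ)/3))^2)
      ≤ ∑' j : ℕ, x ^ j * (2*A₀ + 2*(j:ℝ)*Q) := Summable.tsum_le_tsum hble hbsum hdom
  have htsum_eval : (∑' j : ℕ, x ^ j * (2*A₀ + 2*(j:ℝ)*Q))
      = (2*A₀) * (1-x)⁻¹ + (2*Q) * (x/(1-x)^2) := by
    have e : (fun j : ℕ => x ^ j * (2*A₀ + 2*(j:ℝ)*Q))
        = fun j : ℕ => (2*A₀) * x ^ j + (2*Q) * ((j:ℝ) * x ^ j) := by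
      funext j; ring
    rw [e, Summable.tsum_add (hgeo.mul_left _) (hjgeo.mul_left _), tsum_mul_left, tsum_mul_left,
      tsum_geometric_of_lt_one hx0.le hx1, tsum_coe_mul_geometric_of_norm_lt_one
        (by rw [Real.norm_eq_abs, abs_of_pos hx0]; exact hx1)]
  have h1x : (1:ℝ) - x ≥ 2/3 := by linarith
  have hc1 : (1-x)⁻¹ ≤ 3/2 := by
    rw [inv_le_comm₀ (by linarith) (by norm_num)]
    linarith
  have hc2 : x/(1-x)^2 ≤ 3/4 := by
    rw [div_le_iff₀ (by positivity)]
    nlinarith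
  have hfinal : (∑' j : ℕ, (A j - l ^ (-(j:ℝ)/3))^2) ≤ 3*(A₀ + Q) := by
    rw [htsum_eval] at htsum_le
    calc (∑' j : ℕ, (A j - l ^ (-(j:ℝ)/3))^2)
        ≤ (2*A₀) * (1-x)⁻¹ + (2*Q) * (x/(1-x)^2) := htsum_le
    _ ≤ (2*A₀) * (3/2) + (2*Q) * (3/4) := by
        apply add_le_add
        · apply mul_le_mul_of_nonneg_left hc1 (by linarith)
        · apply mul_le_mul_of_nonneg_left hc2 (by linarith)
    _ ≤ 3*(A₀ + Q) := by linarith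
  have hsq : (∑' j : ℕ, (A j - l ^ (-(j:ℝ)/3))^2) ≤ (1 + A₀ + Q)^2 := by
    nlinarith [sq_nonneg (A₀ + Q - 1), hfinal, hQ0, hA₀0]
  calc Real.sqrt (∑' j : ℕ, (A j - l ^ (-(j:ℝ)/3))^2)
      ≤ Real.sqrt ((1 + A₀ + Q)^2) := Real.sqrt_le_sqrt hsq
  _ = 1 + A₀ + Q := by
      rw [Real.sqrt_sq (by linarith)]
lemma shiftsq_eq (l : ℝ) (hl : l = (2:ℝ)^((5:ℝ)/2)) (j : ℕ) (x : ℝ) :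
    (l ^ (((j:ℝ)+1)/3) * x)^2 = (2:ℝ) ^ ((5:ℝ)/3 * ((j:ℝ)+1)) * x^2 := by
  have := wsq_eq l hl (j+1) x
  push_cast at this
  exact this

set_option maxHeartbeats 800000 in
lemma dyadic_bounds (l : ℝ) (hl : l = (2:ℝ)^((5:ℝ)/2)) (A : ℕ → ℝ) (M : ℝ)
    (hs : Summable (fun j : ℕ => (2:ℝ)^((5:ℝ)/3*(j:ℝ)) * A j^2))
    (hM : (∑' j : ℕ, (2:ℝ)^((5:ℝ)/3*(j:ℝ)) * A j^2) ≤ M) :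
    (∀ j : ℕ, (l^((j:ℝ)/3) * A j)^2 ≤ M) ∧ (∀ j : ℕ, |l^((j:ℝ)/3) * A j| ≤ Real.sqrt M) ∧
    (∀ N : ℕ, ∑ j ∈ Finset.range N,
      (l ^ (((j:ℝ)+1)/3) * A (j+1) - l ^ ((j:ℝ)/3) * A j)^2 ≤ 4*M) ∧
    dyadicQ l A ≤ 4*M := by
  have hnn : ∀ j : ℕ, (0:ℝ) ≤ (2:ℝ)^((5:ℝ)/3*(j:ℝ)) * A j^2 := fun j => by positivity
  have hterm : ∀ j : ℕ, (l^((j:ℝ)/3) * A j)^2 ≤ M := by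
    intro j
    rw [wsq_eq l hl j]
    exact le_trans (Summable.le_tsum hs j (fun i _ => hnn i)) hM
  have habs : ∀ j : ℕ, |l^((j:ℝ)/3) * A j| ≤ Real.sqrt M := by
    intro j
    rw [← Real.sqrt_sq_eq_abs]
    exact Real.sqrt_le_sqrt (hterm j)
  have hshift : ∀ N : ℕ, ∑ j ∈ Finset.range N,
      (l ^ (((j:ℝ)+1)/3) * A (j+1))^2 ≤ M := by
    intro N
    have emb : Function.Injective (fun n : ℕ => n + 1) := fun a b h => by simpa using h
    have : ∑ j ∈ Finset.range N, (l ^ (((j:ℝ)+1)/3) * A (j+1))^2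
        = ∑ k ∈ Finset.map ⟨fun n => n + 1, emb⟩ (Finset.range N),
            (2:ℝ)^((5:ℝ)/3*(k:ℝ)) * A k^2 := by
      rw [Finset.sum_map]
      apply Finset.sum_congr rfl
      intro j _
      simp only [Function.Embedding.coeFn_mk]
      rw [shiftsq_eq l hl j]
      push_cast
      ring_nf
    rw [this]
    exact le_trans (Summable.sum_le_tsum _ (fun i _ => hnn i) hs) hM
  have hplain : ∀ N : ℕ, ∑ j ∈ Finset.range N, (l ^ ((j:ℝ)/3) * A j)^2 ≤ M := by
    intro N
    have : ∑ j ∈ Finset.range N, (l ^ ((j:ℝ)/3) * A j)^2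
        = ∑ j ∈ Finset.range N, (2:ℝ)^((5:ℝ)/3*(j:ℝ)) * A j^2 := by
      apply Finset.sum_congr rfl
      intro j _
      rw [wsq_eq l hl j]
    rw [this]
    exact le_trans (Summable.sum_le_tsum _ (fun i _ => hnn i) hs) hM
  have hpartial : ∀ N : ℕ, ∑ j ∈ Finset.range N,
      (l ^ (((j:ℝ)+1)/3) * A (j+1) - l ^ ((j:ℝ)/3) * A j)^2 ≤ 4*M := by
    intro N
    have hptwise : ∀ j ∈ Finset.range N,
        (l ^ (((j:ℝ)+1)/3) * A (j+1) - l ^ ((j:ℝ)/3) * A j)^2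
        ≤ 2*(l ^ (((j:ℝ)+1)/3) * A (j+1))^2 + 2*(l ^ ((j:ℝ)/3) * A j)^2 := by
      intro j _
      nlinarith [sq_nonneg (l ^ (((j:ℝ)+1)/3) * A (j+1) + l ^ ((j:ℝ)/3) * A j)]
    calc ∑ j ∈ Finset.range N, (l ^ (((j:ℝ)+1)/3) * A (j+1) - l ^ ((j:ℝ)/3) * A j)^2
        ≤ ∑ j ∈ Finset.range N,
          (2*(l ^ (((j:ℝ)+1)/3) * A (j+1))^2 + 2*(l ^ ((j:ℝ)/3) * A j)^2) :=
          Finset.sum_le_sum hptwise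
    _ = 2 * (∑ j ∈ Finset.range N, (l ^ (((j:ℝ)+1)/3) * A (j+1))^2)
        + 2 * (∑ j ∈ Finset.range N, (l ^ ((j:ℝ)/3) * A j)^2) := by
        rw [Finset.sum_add_distrib, Finset.mul_sum, Finset.mul_sum]
    _ ≤ 2 * M + 2 * M := by
        have h1 := hshift N
        have h2 := hplain N
        have hM0 : 0 ≤ M := le_trans (hnn 0) (le_trans (Summable.le_tsum hs 0 (fun i _ => hnn i)) hM)
        nlinarith
    _ = 4*M := by ring
  refine ⟨hterm, habs, hpartial, ?_⟩
  exact Real.tsum_le_of_sum_range_le (fun j => sq_nonneg _) hpartial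

lemma dyadic_w_tendsto (l : ℝ) (hl : l = (2:ℝ)^((5:ℝ)/2)) (A : ℕ → ℝ)
    (hs : Summable (fun j : ℕ => (2:ℝ)^((5:ℝ)/3*(j:ℝ)) * A j^2)) :
    Tendsto (fun N : ℕ => l^((N:ℝ)/3) * A N) atTop (nhds 0) := by
  rw [tendsto_zero_iff_abs_tendsto_zero]
  have heq : (fun N : ℕ => |l^((N:ℝ)/3) * A N|)
      = fun N : ℕ => Real.sqrt ((2:ℝ)^((5:ℝ)/3*(N:ℝ)) * A N^2) := by
    funext N
    rw [← wsq_eq l hl N, Real.sqrt_sq_eq_abs]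
  have h0 : Real.sqrt 0 = 0 := Real.sqrt_zero
  have htend := (Real.continuous_sqrt.tendsto 0).comp hs.tendsto_atTop_zero
  rw [h0] at htend
  have : (abs ∘ fun N : ℕ => l ^ ((N:ℝ)/3) * A N)
      = (Real.sqrt ∘ fun j : ℕ => (2:ℝ)^((5:ℝ)/3*(j:ℝ)) * A j^2) := by
    funext N
    simp only [Function.comp_apply]
    rw [← wsq_eq l hl N, Real.sqrt_sq_eq_abs]
  rw [this]
  exact htend

lemma dyadic_b_summable (l : ℝ) (hl : l = (2:ℝ)^((5:ℝ)/2)) (A : ℕ → ℝ)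
    (hs2 : Summable (fun j : ℕ => A j ^ 2)) :
    Summable (fun j : ℕ => (A j - l ^ (-(j:ℝ)/3))^2) := by
  have hl0 : 0 < l := by rw [hl]; positivity
  have hx0 : (0:ℝ) < l ^ (-(2:ℝ)/3) := Real.rpow_pos_of_pos hl0 _
  have hx1 : l ^ (-(2:ℝ)/3) < 1 := by
    apply Real.rpow_lt_one_of_one_lt_of_neg
    · rw [hl]
      have : (1:ℝ) < 2 := by norm_num
      calc (1:ℝ) = 2 ^ (0:ℝ) := by norm_num
      _ < 2 ^ ((5:ℝ)/2) := by
          apply Real.rpow_lt_rpow_left_iff this |>.mpr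
          norm_num
    · norm_num
  have hqsq : ∀ j : ℕ, (l ^ (-(j:ℝ)/3))^2 = (l ^ (-(2:ℝ)/3))^j := by
    intro j
    rw [← Real.rpow_natCast (l ^ (-(2:ℝ)/3)) j, ← Real.rpow_mul hl0.le,
      ← Real.rpow_natCast (l ^ (-(j:ℝ)/3)) 2, ← Real.rpow_mul hl0.le]
    norm_num
    rw [show -(j:ℝ)/3*2 = -(2:ℝ)/3*(j:ℝ) by ring, show -(2:ℝ)/3*(j:ℝ) = -((2:ℝ)/3*(j:ℝ)) by ring]
  apply Summable.of_nonneg_of_le (fun j => sq_nonneg _) (fun j => ?_)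
    ((hs2.mul_left 2).add ((summable_geometric_of_lt_one hx0.le hx1).mul_left 2))
  have := hqsq j
  nlinarith [sq_nonneg (A j + l ^ (-(j:ℝ)/3)), sq_nonneg (A j - l ^ (-(j:ℝ)/3))]
noncomputable def dyadicD (l : ℝ) (a : ℕ → ℝ → ℝ) (s : ℝ) : ℝ :=
  1 + (a 0 s - 1)^2 + dyadicQ l (fun j => a j s)

noncomputable def dyadicG (l : ℝ) (a : ℕ → ℝ → ℝ) (N : ℕ) (s : ℝ) : ℝ :=
  -(l ^ (-(1:ℝ)/3)) * ((a 0 s - 1)^2 + (l ^ ((N:ℝ)/3) * a N s - 1)^2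
    + (∑ j ∈ Finset.range N, (l ^ (((j:ℝ)+1)/3) * a (j+1) s - l ^ ((j:ℝ)/3) * a j s)^2)
    + 2 * (l ^ ((N:ℝ)/3) * a N s) * (l ^ ((N:ℝ)/3) * a N s - 1)
      * (l ^ (((N:ℝ)+1)/3) * a (N+1) s - 1))

noncomputable def dyadicd (l : ℝ) (a : ℕ → ℝ → ℝ) : ℕ → ℝ → ℝ
  | 0 => fun u => -(a 0 u * a 1 u) + l ^ (-(1:ℝ)/3)
  | (k+1) => fun u => l ^ (((k:ℝ)+1) - 1) * a k u ^ 2 - l ^ ((k:ℝ)+1) * a (k+1) u * a (k+2) u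

section Key

variable (l : ℝ) (T₁ T₂ : ℝ) (a : ℕ → ℝ → ℝ)

lemma dyadic_cont (hderiv0 : ∀ t ∈ Set.Icc T₁ T₂,
      HasDerivAt (a 0) (-(a 0 t * a 1 t) + l ^ (-(1 : ℝ) / 3)) t)
    (hderiv : ∀ j : ℕ, 1 ≤ j → ∀ t ∈ Set.Icc T₁ T₂, HasDerivAt (a j)
      (l ^ ((j : ℝ) - 1) * a (j - 1) t ^ 2 - l ^ (j : ℝ) * a j t * a (j + 1) t) t) :
    ∀ j : ℕ, ContinuousOn (a j) (Set.Icc T₁ T₂) := by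
  intro j u hu
  match j with
  | 0 => exact (hderiv0 u hu).continuousAt.continuousWithinAt
  | (k+1) => exact ((hderiv (k+1) (by omega) u hu).continuousAt).continuousWithinAt

lemma dyadicG_cont (hderiv0 : ∀ t ∈ Set.Icc T₁ T₂,
      HasDerivAt (a 0) (-(a 0 t * a 1 t) + l ^ (-(1 : ℝ) / 3)) t)
    (hderiv : ∀ j : ℕ, 1 ≤ j → ∀ t ∈ Set.Icc T₁ T₂, HasDerivAt (a j)
      (l ^ ((j : ℝ) - 1) * a (j - 1) t ^ 2 - l ^ (j : ℝ) * a j t * a (j + 1) t) t)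
    (N : ℕ) : ContinuousOn (dyadicG l a N) (Set.Icc T₁ T₂) := by
  have hcont := dyadic_cont l T₁ T₂ a hderiv0 hderiv
  unfold dyadicG
  apply ContinuousOn.mul continuousOn_const
  refine ContinuousOn.add (ContinuousOn.add (ContinuousOn.add ?_ ?_) ?_) ?_
  · exact ((hcont 0).sub continuousOn_const).pow 2
  · exact ((continuousOn_const.mul (hcont N)).sub continuousOn_const).pow 2
  · apply continuousOn_finset_sum
    intro j _
    exact ((continuousOn_const.mul (hcont (j+1))).sub
      (continuousOn_const.mul (hcont j))).pow 2
  · exact (((continuousOn_const.mul (continuousOn_const.mul (hcont N))).mul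
      ((continuousOn_const.mul (hcont N)).sub continuousOn_const)).mul
      ((continuousOn_const.mul (hcont (N+1))).sub continuousOn_const))

lemma dyadic_hasDerivAt (hl : l = (2:ℝ)^((5:ℝ)/2))
    (hderiv0 : ∀ t ∈ Set.Icc T₁ T₂,
      HasDerivAt (a 0) (-(a 0 t * a 1 t) + l ^ (-(1 : ℝ) / 3)) t)
    (hderiv : ∀ j : ℕ, 1 ≤ j → ∀ t ∈ Set.Icc T₁ T₂, HasDerivAt (a j)
      (l ^ ((j : ℝ) - 1) * a (j - 1) t ^ 2 - l ^ (j : ℝ) * a j t * a (j + 1) t) t)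
    (N : ℕ) : ∀ u ∈ Set.Icc T₁ T₂,
    HasDerivAt (fun s => ∑ j ∈ Finset.range (N+1), (a j s - l ^ (-(j:ℝ)/3))^2)
      (dyadicG l a N u) u := by
  have hl0 : 0 < l := by rw [hl]; positivity
  intro u hu
  have had : ∀ j : ℕ, HasDerivAt (a j) (dyadicd l a j u) u := by
    intro j
    match j with
    | 0 => simpa [dyadicd] using hderiv0 u hu
    | (k+1) =>
      have h := hderiv (k+1) (by omega) u hu
      push_cast at h
      simpa [dyadicd] using h
  have hsum_d : HasDerivAt (fun s => ∑ j ∈ Finset.range (N+1), (a j s - l ^ (-(j:ℝ)/3))^2)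
      (∑ j ∈ Finset.range (N+1), 2 * (a j u - l ^ (-(j:ℝ)/3)) * dyadicd l a j u) u := by
    apply HasDerivAt.fun_sum
    intro j _
    have h1 : HasDerivAt (fun s => a j s - l ^ (-(j:ℝ)/3)) (dyadicd l a j u) u :=
      (had j).sub_const _
    have h2 := h1.fun_pow 2
    convert h2 using 1
    rfl
    simp
  have hid := dyadic_sum_identity l hl0 (fun j => a j u) (fun j => dyadicd l a j u)
    rfl (fun j => rfl) N
  have : dyadicG l a N u
      = ∑ j ∈ Finset.range (N+1), 2 * (a j u - l ^ (-(j:ℝ)/3)) * dyadicd l a j u := by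
    rw [hid]
    unfold dyadicG
    ring
  rw [this]
  exact hsum_d

end Key
set_option maxHeartbeats 2000000 in
lemma dyadic_key (l : ℝ) (hl : l = (2:ℝ)^((5:ℝ)/2)) (T₁ T₂ : ℝ) (hT : T₁ ≤ T₂)
    (a : ℕ → ℝ → ℝ)
    (hderiv0 : ∀ t ∈ Set.Icc T₁ T₂,
      HasDerivAt (a 0) (-(a 0 t * a 1 t) + l ^ (-(1 : ℝ) / 3)) t)
    (hderiv : ∀ j : ℕ, 1 ≤ j → ∀ t ∈ Set.Icc T₁ T₂, HasDerivAt (a j)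
      (l ^ ((j : ℝ) - 1) * a (j - 1) t ^ 2 - l ^ (j : ℝ) * a j t * a (j + 1) t) t)
    (hl2 : ∀ t ∈ Set.Icc T₁ T₂, Summable (fun j : ℕ => a j t ^ 2))
    (hsum : ∀ t ∈ Set.Icc T₁ T₂,
      Summable (fun j : ℕ => (2 : ℝ) ^ ((5 : ℝ) / 3 * j) * a j t ^ 2))
    (M : ℝ) (hM : ∀ t ∈ Set.Icc T₁ T₂,
      (∑' j : ℕ, (2 : ℝ) ^ ((5 : ℝ) / 3 * j) * a j t ^ 2) ≤ M)
    (t t' : ℝ) (ht : T₁ ≤ t) (htt : t ≤ t') (ht' : t' ≤ T₂) :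
    (∑' j : ℕ, (a j t' - l ^ (-(j:ℝ)/3))^2) - (∑' j : ℕ, (a j t - l ^ (-(j:ℝ)/3))^2)
      = -(l ^ (-(1:ℝ)/3)) * ∫ s in t..t', dyadicD l a s := by
  have hl0 : 0 < l := by rw [hl]; positivity
  have hl1 : 1 < l := by
    rw [hl]
    calc (1:ℝ) = 2 ^ (0:ℝ) := by norm_num
    _ < 2 ^ ((5:ℝ)/2) := by
        apply (Real.rpow_lt_rpow_left_iff (by norm_num : (1:ℝ) < 2)).mpr
        norm_num
  have hc0 : 0 < l ^ (-(1:ℝ)/3) := Real.rpow_pos_of_pos hl0 _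
  have hc1 : l ^ (-(1:ℝ)/3) ≤ 1 :=
    le_of_lt (Real.rpow_lt_one_of_one_lt_of_neg hl1 (by norm_num))
  have hsubIcc : Set.Icc t t' ⊆ Set.Icc T₁ T₂ := Set.Icc_subset_Icc ht ht'
  have huIcc : Set.uIcc t t' ⊆ Set.Icc T₁ T₂ := by
    rw [Set.uIcc_of_le htt]; exact hsubIcc
  have huIoc : Set.uIoc t t' ⊆ Set.Icc T₁ T₂ := by
    rw [Set.uIoc_of_le htt]
    exact fun x hx => hsubIcc ⟨le_of_lt hx.1, hx.2⟩
  have htIcc : t ∈ Set.Icc T₁ T₂ := ⟨ht, le_trans htt ht'⟩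
  have ht'Icc : t' ∈ Set.Icc T₁ T₂ := ⟨le_trans ht htt, ht'⟩
  have hM0 : 0 ≤ M := by
    have h1 := hM t htIcc
    have h2 : (0:ℝ) ≤ ∑' j : ℕ, (2 : ℝ) ^ ((5 : ℝ) / 3 * (j:ℝ)) * a j t ^ 2 :=
      tsum_nonneg (fun j => by positivity)
    linarith
  -- FTC for each N
  have hFTC : ∀ N : ℕ,
      (∑ j ∈ Finset.range (N+1), (a j t' - l ^ (-(j:ℝ)/3))^2)
      - (∑ j ∈ Finset.range (N+1), (a j t - l ^ (-(j:ℝ)/3))^2)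
      = ∫ s in t..t', dyadicG l a N s := by
    intro N
    refine (intervalIntegral.integral_eq_sub_of_hasDerivAt
      (f := fun s => ∑ j ∈ Finset.range (N+1), (a j s - l ^ (-(j:ℝ)/3))^2) ?_ ?_).symm
    · intro s hs
      exact dyadic_hasDerivAt l T₁ T₂ a hl hderiv0 hderiv N s (huIcc hs)
    · exact ((dyadicG_cont l T₁ T₂ a hderiv0 hderiv N).mono huIcc).intervalIntegrable
  set C : ℝ := (2*M+2) + (2*M+2) + 4*M + 2*(Real.sqrt M)*(Real.sqrt M+1)^2 with hC_def
  -- uniform bound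
  have hGbd : ∀ N : ℕ, ∀ x ∈ Set.Icc T₁ T₂, ‖dyadicG l a N x‖ ≤ C := by
    intro N x hx
    obtain ⟨hterm, habs, hpart, -⟩ :=
      dyadic_bounds l hl (fun j => a j x) M (hsum x hx) (hM x hx)
    have h00 : l ^ (((0:ℕ):ℝ)/3) = 1 := by norm_num
    have ha0 : (a 0 x)^2 ≤ M := by
      have h := hterm 0
      rw [h00, one_mul] at h
      exact h
    have hA : (a 0 x - 1)^2 ≤ 2*M + 2 := by nlinarith [sq_nonneg (a 0 x + 1)]
    have hB : (l ^ ((N:ℝ)/3) * a N x - 1)^2 ≤ 2*M + 2 := by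
      have h := hterm N
      nlinarith [sq_nonneg (l ^ ((N:ℝ)/3) * a N x + 1)]
    have hS0 : (0:ℝ) ≤ ∑ j ∈ Finset.range N,
        (l ^ (((j:ℝ)+1)/3) * a (j+1) x - l ^ ((j:ℝ)/3) * a j x)^2 :=
      Finset.sum_nonneg fun j _ => sq_nonneg _
    have hA0 : (0:ℝ) ≤ (a 0 x - 1)^2 := sq_nonneg _
    have hB0 : (0:ℝ) ≤ (l ^ ((N:ℝ)/3) * a N x - 1)^2 := sq_nonneg _
    have hwabs : |l ^ ((N:ℝ)/3) * a N x| ≤ Real.sqrt M := habs N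
    have hw1abs : |l ^ (((N:ℝ)+1)/3) * a (N+1) x| ≤ Real.sqrt M := by
      have h := habs (N+1)
      have he : ((N+1:ℕ):ℝ)/3 = ((N:ℝ)+1)/3 := by push_cast; ring
      rw [he] at h
      exact h
    have hMs : 0 ≤ Real.sqrt M := Real.sqrt_nonneg M
    have habs1 : |l ^ ((N:ℝ)/3) * a N x - 1| ≤ Real.sqrt M + 1 := by
      rw [sub_eq_add_neg]
      calc |l ^ ((N:ℝ)/3) * a N x + -1| ≤ |l ^ ((N:ℝ)/3) * a N x| + |(-1:ℝ)| := abs_add_le _ _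
      _ ≤ Real.sqrt M + 1 := by rw [abs_neg, abs_one]; linarith
    have habs2 : |l ^ (((N:ℝ)+1)/3) * a (N+1) x - 1| ≤ Real.sqrt M + 1 := by
      rw [sub_eq_add_neg]
      calc |l ^ (((N:ℝ)+1)/3) * a (N+1) x + -1|
          ≤ |l ^ (((N:ℝ)+1)/3) * a (N+1) x| + |(-1:ℝ)| := abs_add_le _ _
      _ ≤ Real.sqrt M + 1 := by rw [abs_neg, abs_one]; linarith
    have hBd : |2 * (l ^ ((N:ℝ)/3) * a N x) * (l ^ ((N:ℝ)/3) * a N x - 1)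
        * (l ^ (((N:ℝ)+1)/3) * a (N+1) x - 1)| ≤ 2*(Real.sqrt M)*(Real.sqrt M+1)^2 := by
      rw [abs_mul, abs_mul, abs_mul, abs_two]
      calc 2 * |l ^ ((N:ℝ)/3) * a N x| * |l ^ ((N:ℝ)/3) * a N x - 1|
          * |l ^ (((N:ℝ)+1)/3) * a (N+1) x - 1|
          ≤ 2 * Real.sqrt M * (Real.sqrt M + 1) * (Real.sqrt M + 1) := by
            apply mul_le_mul _ habs2 (abs_nonneg _) (by positivity)
            apply mul_le_mul _ habs1 (abs_nonneg _) (by positivity)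
            apply mul_le_mul_of_nonneg_left hwabs (by norm_num)
      _ = 2*(Real.sqrt M)*(Real.sqrt M+1)^2 := by ring
    have hinner : |(a 0 x - 1)^2 + (l ^ ((N:ℝ)/3) * a N x - 1)^2
        + (∑ j ∈ Finset.range N, (l ^ (((j:ℝ)+1)/3) * a (j+1) x - l ^ ((j:ℝ)/3) * a j x)^2)
        + 2 * (l ^ ((N:ℝ)/3) * a N x) * (l ^ ((N:ℝ)/3) * a N x - 1)
          * (l ^ (((N:ℝ)+1)/3) * a (N+1) x - 1)| ≤ C := by
      obtain ⟨hBdl, hBdu⟩ := abs_le.mp hBd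
      have hSle := hpart N
      rw [abs_le]
      constructor
      · rw [hC_def]; nlinarith
      · rw [hC_def]; nlinarith
    rw [Real.norm_eq_abs]
    unfold dyadicG
    rw [abs_mul, abs_neg, abs_of_pos hc0]
    exact le_trans (mul_le_of_le_one_left (abs_nonneg _) hc1) hinner
  -- dominated convergence
  have hDCT : Filter.Tendsto (fun N : ℕ => ∫ s in t..t', dyadicG l a N s) Filter.atTop
      (nhds (∫ s in t..t', -(l ^ (-(1:ℝ)/3)) * dyadicD l a s)) := by
    apply intervalIntegral.tendsto_integral_filter_of_dominated_convergence (fun _ => C)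
    · exact Filter.Eventually.of_forall fun N =>
        ((dyadicG_cont l T₁ T₂ a hderiv0 hderiv N).mono huIoc).aestronglyMeasurable
          measurableSet_uIoc
    · exact Filter.Eventually.of_forall fun N =>
        Filter.Eventually.of_forall fun x hx => hGbd N x (huIoc hx)
    · exact intervalIntegrable_const
    · apply Filter.Eventually.of_forall
      intro x hx
      have hxI := huIoc hx
      have hw := dyadic_w_tendsto l hl (fun j => a j x) (hsum x hxI)
      have hw' : Filter.Tendsto (fun N : ℕ => l ^ (((N:ℝ)+1)/3) * a (N+1) x)
          Filter.atTop (nhds 0) := by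
        have h1 := hw.comp (Filter.tendsto_add_atTop_nat 1)
        have he : (fun N : ℕ => l ^ (((N:ℝ)+1)/3) * a (N+1) x)
            = (fun N : ℕ => l ^ ((N:ℝ)/3) * a N x) ∘ (fun N => N + 1) := by
          funext N
          simp only [Function.comp_apply]
          have : ((N+1:ℕ):ℝ)/3 = ((N:ℝ)+1)/3 := by push_cast; ring
          rw [this]
        rw [he]
        exact h1
      have hB : Filter.Tendsto (fun N : ℕ => (l ^ ((N:ℝ)/3) * a N x - 1)^2)
          Filter.atTop (nhds 1) := by
        have h2 := (hw.sub_const 1).pow 2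
        norm_num at h2
        exact h2
      have hQs : Filter.Tendsto (fun N : ℕ => ∑ j ∈ Finset.range N,
          (l ^ (((j:ℝ)+1)/3) * a (j+1) x - l ^ ((j:ℝ)/3) * a j x)^2) Filter.atTop
          (nhds (dyadicQ l (fun j => a j x))) :=
        (delta_summable l hl (fun j => a j x) (hsum x hxI)).hasSum.tendsto_sum_nat
      have hBdt : Filter.Tendsto (fun N : ℕ =>
          2 * (l ^ ((N:ℝ)/3) * a N x) * (l ^ ((N:ℝ)/3) * a N x - 1)
          * (l ^ (((N:ℝ)+1)/3) * a (N+1) x - 1)) Filter.atTop (nhds 0) := by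
        have h3 := (((tendsto_const_nhds (x := (2:ℝ))).mul hw).mul
          (hw.sub_const 1)).mul (hw'.sub_const 1)
        norm_num at h3
        exact h3
      have hall := ((((tendsto_const_nhds (x := (a 0 x - 1)^2)).add hB).add hQs).add
        hBdt).const_mul (-(l ^ (-(1:ℝ)/3)))
      have hval : -(l ^ (-(1:ℝ)/3)) * ((a 0 x - 1)^2 + 1 + dyadicQ l (fun j => a j x) + 0)
          = -(l ^ (-(1:ℝ)/3)) * dyadicD l a x := by
        unfold dyadicD
        ring
      rw [hval] at hall
      have hfun2 : (fun N : ℕ => dyadicG l a N x)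
          = fun N : ℕ => -(l ^ (-(1:ℝ)/3)) * ((a 0 x - 1)^2 + (l ^ ((N:ℝ)/3) * a N x - 1)^2
          + (∑ j ∈ Finset.range N, (l ^ (((j:ℝ)+1)/3) * a (j+1) x - l ^ ((j:ℝ)/3) * a j x)^2)
          + 2 * (l ^ ((N:ℝ)/3) * a N x) * (l ^ ((N:ℝ)/3) * a N x - 1)
            * (l ^ (((N:ℝ)+1)/3) * a (N+1) x - 1)) := by
        funext N
        unfold dyadicG
        ring
      rw [hfun2]
      exact hall
  -- limit of partial sums
  have hsbt : Summable (fun j : ℕ => (a j t - l ^ (-(j:ℝ)/3))^2) :=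
    dyadic_b_summable l hl (fun j => a j t) (hl2 t htIcc)
  have hsbt' : Summable (fun j : ℕ => (a j t' - l ^ (-(j:ℝ)/3))^2) :=
    dyadic_b_summable l hl (fun j => a j t') (hl2 t' ht'Icc)
  have hLHS : Filter.Tendsto (fun N : ℕ =>
      (∑ j ∈ Finset.range (N+1), (a j t' - l ^ (-(j:ℝ)/3))^2)
      - (∑ j ∈ Finset.range (N+1), (a j t - l ^ (-(j:ℝ)/3))^2)) Filter.atTop
      (nhds ((∑' j : ℕ, (a j t' - l ^ (-(j:ℝ)/3))^2)
        - ∑' j : ℕ, (a j t - l ^ (-(j:ℝ)/3))^2)) := by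
    apply Filter.Tendsto.sub
    · have h4 := (hsbt'.hasSum.tendsto_sum_nat).comp (Filter.tendsto_add_atTop_nat 1)
      exact h4
    · have h5 := (hsbt.hasSum.tendsto_sum_nat).comp (Filter.tendsto_add_atTop_nat 1)
      exact h5
  have hfun : (fun N : ℕ =>
      (∑ j ∈ Finset.range (N+1), (a j t' - l ^ (-(j:ℝ)/3))^2)
      - (∑ j ∈ Finset.range (N+1), (a j t - l ^ (-(j:ℝ)/3))^2))
      = fun N : ℕ => ∫ s in t..t', dyadicG l a N s := funext hFTC
  rw [hfun] at hLHS
  have huniq := tendsto_nhds_unique hLHS hDCT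
  rw [huniq]
  exact intervalIntegral.integral_const_mul _ _
set_option maxHeartbeats 1000000 in
lemma dyadic_D_integrable (l : ℝ) (hl : l = (2:ℝ)^((5:ℝ)/2)) (T₁ T₂ : ℝ) (hT : T₁ ≤ T₂)
    (a : ℕ → ℝ → ℝ)
    (hderiv0 : ∀ t ∈ Set.Icc T₁ T₂,
      HasDerivAt (a 0) (-(a 0 t * a 1 t) + l ^ (-(1 : ℝ) / 3)) t)
    (hderiv : ∀ j : ℕ, 1 ≤ j → ∀ t ∈ Set.Icc T₁ T₂, HasDerivAt (a j)
      (l ^ ((j : ℝ) - 1) * a (j - 1) t ^ 2 - l ^ (j : ℝ) * a j t * a (j + 1) t) t)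
    (hsum : ∀ t ∈ Set.Icc T₁ T₂,
      Summable (fun j : ℕ => (2 : ℝ) ^ ((5 : ℝ) / 3 * j) * a j t ^ 2))
    (M : ℝ) (hM : ∀ t ∈ Set.Icc T₁ T₂,
      (∑' j : ℕ, (2 : ℝ) ^ ((5 : ℝ) / 3 * j) * a j t ^ 2) ≤ M) :
    IntervalIntegrable (dyadicD l a) MeasureTheory.volume T₁ T₂ := by
  have hcont := dyadic_cont l T₁ T₂ a hderiv0 hderiv
  rw [intervalIntegrable_iff_integrableOn_Icc_of_le hT]
  have hWcont : ∀ N : ℕ, ContinuousOn (fun s => 1 + (a 0 s - 1)^2 + ∑ j ∈ Finset.range N,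
      (l ^ (((j:ℝ)+1)/3) * a (j+1) s - l ^ ((j:ℝ)/3) * a j s)^2) (Set.Icc T₁ T₂) := by
    intro N
    apply ContinuousOn.add
    · exact continuousOn_const.add (((hcont 0).sub continuousOn_const).pow 2)
    · apply continuousOn_finset_sum
      intro j _
      exact ((continuousOn_const.mul (hcont (j+1))).sub
        (continuousOn_const.mul (hcont j))).pow 2
  have hWlim : ∀ x ∈ Set.Icc T₁ T₂, Filter.Tendsto (fun N : ℕ =>
      1 + (a 0 x - 1)^2 + ∑ j ∈ Finset.range N,
      (l ^ (((j:ℝ)+1)/3) * a (j+1) x - l ^ ((j:ℝ)/3) * a j x)^2) Filter.atTop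
      (nhds (dyadicD l a x)) := by
    intro x hx
    have hQs := (delta_summable l hl (fun j => a j x) (hsum x hx)).hasSum.tendsto_sum_nat
    have h1 := (tendsto_const_nhds (x := 1 + (a 0 x - 1)^2)).add hQs
    simp only [dyadicD]
    exact h1
  have hmeas : MeasureTheory.AEStronglyMeasurable (dyadicD l a)
      (MeasureTheory.volume.restrict (Set.Icc T₁ T₂)) := by
    apply aestronglyMeasurable_of_tendsto_ae Filter.atTop
      (fun N => ((hWcont N).aestronglyMeasurable measurableSet_Icc))
    apply (MeasureTheory.ae_restrict_mem measurableSet_Icc).mono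
    intro x hx
    exact hWlim x hx
  apply MeasureTheory.Integrable.mono'
    (g := fun _ => 1 + (2*M+2) + 4*M)
    ((MeasureTheory.integrableOn_const_iff enorm_ne_top).mpr (Or.inr measure_Icc_lt_top)) hmeas
  apply (MeasureTheory.ae_restrict_mem measurableSet_Icc).mono
  intro x hx
  obtain ⟨hterm, -, -, hQle⟩ :=
    dyadic_bounds l hl (fun j => a j x) M (hsum x hx) (hM x hx)
  have hQ0 : 0 ≤ dyadicQ l (fun j => a j x) := tsum_nonneg fun j => sq_nonneg _
  have h00 : l ^ (((0:ℕ):ℝ)/3) = 1 := by norm_num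
  have ha0 : (a 0 x)^2 ≤ M := by
    have h := hterm 0
    rw [h00, one_mul] at h
    exact h
  have hA : (a 0 x - 1)^2 ≤ 2*M + 2 := by nlinarith [sq_nonneg (a 0 x + 1)]
  have hD0 : 0 ≤ dyadicD l a x := by
    simp only [dyadicD]
    nlinarith [sq_nonneg (a 0 x - 1)]
  rw [Real.norm_eq_abs, abs_of_nonneg hD0]
  simp only [dyadicD]
  linarith

/-- Every regular solution of the forced dyadic model (force `f = (λ^(-1/3),0,…)`)
approaches the fixed point `ā_j = λ^(-j/3)` linearly in `l²`:
`‖b(T₂)‖ - ‖b(T₁)‖ ≤ -(1/2)λ^(-1/3)(T₂-T₁)` where `b = a - ā`. -/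
theorem dyadic_regular_solution_approaches_fixed_point
    (l : ℝ) (hl : l = (2 : ℝ) ^ ((5 : ℝ) / 2)) (T₁ T₂ : ℝ) (hT : T₁ ≤ T₂)
    (a : ℕ → ℝ → ℝ)
    (hderiv0 : ∀ t ∈ Set.Icc T₁ T₂,
      HasDerivAt (a 0) (-(a 0 t * a 1 t) + l ^ (-(1 : ℝ) / 3)) t)
    (hderiv : ∀ j : ℕ, 1 ≤ j → ∀ t ∈ Set.Icc T₁ T₂, HasDerivAt (a j)
      (l ^ ((j : ℝ) - 1) * a (j - 1) t ^ 2 - l ^ (j : ℝ) * a j t * a (j + 1) t) t)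
    (hl2 : ∀ t ∈ Set.Icc T₁ T₂, Summable (fun j : ℕ => a j t ^ 2))
    (hsum : ∀ t ∈ Set.Icc T₁ T₂,
      Summable (fun j : ℕ => (2 : ℝ) ^ ((5 : ℝ) / 3 * j) * a j t ^ 2))
    (hreg : ∃ M : ℝ, ∀ t ∈ Set.Icc T₁ T₂,
      (∑' j : ℕ, (2 : ℝ) ^ ((5 : ℝ) / 3 * j) * a j t ^ 2) ≤ M)
    (b : ℕ → ℝ → ℝ) (hb : ∀ j : ℕ, ∀ t : ℝ, b j t = a j t - l ^ (-(j : ℝ) / 3)) :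
    Real.sqrt (∑' j : ℕ, b j T₂ ^ 2) - Real.sqrt (∑' j : ℕ, b j T₁ ^ 2)
      ≤ -(1 / 2) * l ^ (-(1 : ℝ) / 3) * (T₂ - T₁) := by
  obtain ⟨M, hM⟩ := hreg
  have hl0 : 0 < l := by rw [hl]; positivity
  have hc0 : 0 < l ^ (-(1:ℝ)/3) := Real.rpow_pos_of_pos hl0 _
  simp only [hb]
  -- the key inequality, via the Gronwall lemma
  have hkey := fun (t t' : ℝ) (h1 : T₁ ≤ t) (h2 : t ≤ t') (h3 : t' ≤ T₂) =>
    dyadic_key l hl T₁ T₂ hT a hderiv0 hderiv hl2 hsum M hM t t' h1 h2 h3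
  have hDint := dyadic_D_integrable l hl T₁ T₂ hT a hderiv0 hderiv hsum M hM
  set g : ℝ → ℝ := fun u => Real.sqrt (∑' j : ℕ, (a j u - l ^ (-(j:ℝ)/3))^2) with hg_def
  set h : ℝ → ℝ := fun u => ∑' j : ℕ, (a j u - l ^ (-(j:ℝ)/3))^2 with hh_def
  have hh0 : ∀ u, 0 ≤ h u := fun u => tsum_nonneg fun j => sq_nonneg _
  have hgsq : ∀ u, g u ^ 2 = h u := fun u => Real.sq_sqrt (hh0 u)
  -- D bounds on Icc
  have hD1 : ∀ u ∈ Set.Icc T₁ T₂, 1 ≤ dyadicD l a u := by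
    intro u hu
    have hQ0 : 0 ≤ dyadicQ l (fun j => a j u) := tsum_nonneg fun j => sq_nonneg _
    simp only [dyadicD]
    nlinarith [sq_nonneg (a 0 u - 1)]
  have hM0 : 0 ≤ M := by
    have h1 := hM T₁ ⟨le_refl _, hT⟩
    have h2 : (0:ℝ) ≤ ∑' j : ℕ, (2 : ℝ) ^ ((5 : ℝ) / 3 * (j:ℝ)) * a j T₁ ^ 2 :=
      tsum_nonneg (fun j => by positivity)
    linarith
  have hDle : ∀ u ∈ Set.Icc T₁ T₂, dyadicD l a u ≤ 1 + (2*M+2) + 4*M := by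
    intro u hu
    obtain ⟨hterm, -, -, hQle⟩ :=
      dyadic_bounds l hl (fun j => a j u) M (hsum u hu) (hM u hu)
    have h00 : l ^ (((0:ℕ):ℝ)/3) = 1 := by norm_num
    have ha0 : (a 0 u)^2 ≤ M := by
      have h1 := hterm 0
      rw [h00, one_mul] at h1
      exact h1
    have hA : (a 0 u - 1)^2 ≤ 2*M + 2 := by nlinarith [sq_nonneg (a 0 u + 1)]
    simp only [dyadicD]
    linarith
  -- h is Lipschitz on Icc, hence g continuous
  have hhdiff : ∀ x ∈ Set.Icc T₁ T₂, ∀ y ∈ Set.Icc T₁ T₂, x ≤ y →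
      |h y - h x| ≤ (1 + (2*M+2) + 4*M) * (y - x) := by
    intro x hx y hy hxy
    have hk := hkey x y hx.1 hxy hy.2
    have hint : IntervalIntegrable (dyadicD l a) MeasureTheory.volume x y := by
      apply hDint.mono_set
      rw [Set.uIcc_of_le hxy, Set.uIcc_of_le hT]
      exact Set.Icc_subset_Icc hx.1 hy.2
    have hlow : (y - x) * 1 ≤ ∫ s in x..y, dyadicD l a s := by
      have e : ∫ s in x..y, (1:ℝ) = (y - x) * 1 := by simp
      rw [← e]
      apply intervalIntegral.integral_mono_on hxy (by simp) hint
      intro s hs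
      exact hD1 s ⟨le_trans hx.1 hs.1, le_trans hs.2 hy.2⟩
    have hupp : (∫ s in x..y, dyadicD l a s) ≤ (y - x) * (1 + (2*M+2) + 4*M) := by
      have e : ∫ s in x..y, (1 + (2*M+2) + 4*M : ℝ) = (y - x) * (1 + (2*M+2) + 4*M) := by
        rw [intervalIntegral.integral_const, smul_eq_mul]
      rw [← e]
      apply intervalIntegral.integral_mono_on hxy hint (by simp)
      intro s hs
      exact hDle s ⟨le_trans hx.1 hs.1, le_trans hs.2 hy.2⟩
    have hc1 : l ^ (-(1:ℝ)/3) ≤ 1 := by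
      apply le_of_lt
      apply Real.rpow_lt_one_of_one_lt_of_neg _ (by norm_num)
      rw [hl]
      calc (1:ℝ) = 2 ^ (0:ℝ) := by norm_num
      _ < 2 ^ ((5:ℝ)/2) := by
          apply (Real.rpow_lt_rpow_left_iff (by norm_num : (1:ℝ) < 2)).mpr
          norm_num
    rw [abs_le]
    constructor
    · have : h y - h x = -(l ^ (-(1:ℝ)/3)) * ∫ s in x..y, dyadicD l a s := hk
      rw [this]
      have hi0 : 0 ≤ ∫ s in x..y, dyadicD l a s := le_trans (by nlinarith) hlow
      nlinarith
    · have : h y - h x = -(l ^ (-(1:ℝ)/3)) * ∫ s in x..y, dyadicD l a s := hk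
      rw [this]
      have hi0 : 0 ≤ ∫ s in x..y, dyadicD l a s := le_trans (by nlinarith) hlow
      nlinarith
  have hgcont : ContinuousOn g (Set.Icc T₁ T₂) := by
    have hhcont : ContinuousOn h (Set.Icc T₁ T₂) := by
      apply (LipschitzOnWith.of_dist_le_mul (K := Real.toNNReal (1 + (2*M+2) + 4*M))
        (f := h) (s := Set.Icc T₁ T₂) ?_).continuousOn
      intro x hx y hy
      rw [Real.dist_eq, Real.dist_eq, Real.coe_toNNReal _ (by linarith)]
      rcases le_total x y with hxy | hyx
      · have h5 := hhdiff x hx y hy hxy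
        have e1 : |x - y| = y - x := by
          rw [abs_sub_comm]; exact abs_of_nonneg (by linarith)
        rw [e1, abs_sub_comm]
        exact h5
      · have h5 := hhdiff y hy x hx hyx
        have e1 : |x - y| = x - y := abs_of_nonneg (by linarith)
        rw [e1]
        exact h5
    exact Real.continuous_sqrt.comp_continuousOn hhcont
  -- assemble via Gronwall
  have hgron := gronwall_linear_decay T₁ T₂ (l ^ (-(1:ℝ)/3)) hT hc0 g (dyadicD l a)
    hgcont (fun u _ => Real.sqrt_nonneg _) hD1
    (fun u hu => by
      have := dyadic_norm_bound l hl (fun j => a j u) (hsum u hu)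
      simp only [dyadicD]
      exact this)
    hDint
    (fun t t' h1 h2 h3 => by
      rw [hgsq, hgsq]
      have := hkey t t' h1 h2 h3
      rw [hh_def]
      linarith [this])
  linarith [hgron]
end

section
/- Every solution a(t) of the dyadic model with force f = (λ^{-1/3},0,0,...) and a(0) ∈ l² blows up in finite time in H^{5/6} norm: there exists t* with 0 ≤ t* ≤ 2λ^{1/3} ||a(0) - ā||_{l²} (where ā_j = λ^{-j/3} is the fixed point) such that limsup_{t→t*} ||a(t)||_{H^{5/6}} = ∞. -/
open Real Filter Set Finset MeasureTheory


lemma aux_log_le_sqrt {u : ℝ} (hu : 0 ≤ u) : Real.log (1 + u) ≤ Real.sqrt u := by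
  set s := Real.sqrt u with hs
  have hs0 : 0 ≤ s := Real.sqrt_nonneg u
  have husq : u = s ^ 2 := by rw [hs, sq_sqrt hu]
  have hexp : 1 + u ≤ Real.exp s := by
    have h4 := Real.sum_le_exp_of_nonneg hs0 4
    have hsum : ∑ i ∈ range 4, s ^ i / (Nat.factorial i : ℝ) = 1 + s + s^2/2 + s^3/6 := by
      norm_num [Finset.sum_range_succ, Nat.factorial]
      try ring
    rw [hsum] at h4
    nlinarith [sq_nonneg (s - 3), sq_nonneg s, hs0]
  have h1u : (0:ℝ) < 1 + u := by linarith
  calc Real.log (1 + u) ≤ Real.log (Real.exp s) := Real.log_le_log h1u hexp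
    _ = s := Real.log_exp s

lemma aux_j_le : ∀ j : ℕ, (j + 1 : ℝ) ≤ 2 * (3/2)^j := by
  intro j
  induction j with
  | zero => norm_num
  | succ n ih =>
    have h1 : (1:ℝ) ≤ (3/2)^n := one_le_pow₀ (by norm_num)
    push_cast
    push_cast at ih
    rw [pow_succ]
    nlinarith

lemma aux_geom_half : ∀ n : ℕ, ∑ j ∈ range n, ((1:ℝ)/2)^j ≤ 2 := by
  intro n
  rw [geom_sum_eq (by norm_num : ((1:ℝ)/2) ≠ 1) n, div_le_iff_of_neg (by norm_num)]
  have : (0:ℝ) ≤ ((1:ℝ)/2)^n := by positivity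
  linarith

lemma aux_weight_sum {y : ℝ} (hy0 : 0 ≤ y) (hy : y ≤ 1/3) (n : ℕ) :
    ∑ j ∈ range n, (j + 1 : ℝ) * y ^ j ≤ 4 := by
  have h1 : ∀ j ∈ range n, (j + 1 : ℝ) * y ^ j ≤ 2 * ((1:ℝ)/2)^j := by
    intro j _
    have hyj : y ^ j ≤ (1/3 : ℝ)^j := pow_le_pow_left₀ hy0 hy j
    have h2 : (j + 1 : ℝ) * y ^ j ≤ (j+1) * (1/3)^j :=
      mul_le_mul_of_nonneg_left hyj (by positivity)
    have h3 : (j + 1 : ℝ) * (1/3)^j ≤ 2 * (3/2)^j * (1/3)^j :=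
      mul_le_mul_of_nonneg_right (aux_j_le j) (by positivity)
    have h4 : (2 * (3/2)^j * ((1:ℝ)/3)^j : ℝ) = 2 * ((1:ℝ)/2)^j := by
      rw [mul_assoc, ← mul_pow]
      norm_num
    linarith
  calc ∑ j ∈ range n, (j + 1 : ℝ) * y ^ j ≤ ∑ j ∈ range n, 2 * ((1:ℝ)/2)^j :=
        Finset.sum_le_sum h1
    _ = 2 * ∑ j ∈ range n, ((1:ℝ)/2)^j := by rw [Finset.mul_sum]
    _ ≤ 2 * 2 := by have := aux_geom_half n; linarith
    _ = 4 := by norm_num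

lemma aux_abs_le {u ε : ℝ} (hε : 0 < ε) : |u| ≤ ε/2 + u^2/(2*ε) := by
  have key : 2*ε*|u| ≤ ε^2 + u^2 := by nlinarith [sq_nonneg (|u| - ε), sq_abs u]
  have h2 : (0:ℝ) < 2*ε := by linarith
  calc |u| = (2*ε*|u|)/(2*ε) := by field_simp
    _ ≤ (ε^2 + u^2)/(2*ε) := by gcongr
    _ = ε/2 + u^2/(2*ε) := by field_simp

lemma aux_step (p q r : ℝ) :
    -2*(q-1)*(r-1)*q + 2*(p-1)*(q-1)*p - (q-1)^2 + (p-1)^2 - (q-p)^2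
      = 2*(q-1)*(p^2 - q*r) := by ring


lemma aux_cs (h : ℕ → ℝ) (j : ℕ) :
    (h j)^2 ≤ (j+1 : ℝ) * ((h 0)^2 + ∑ k ∈ range j, (h (k+1) - h k)^2) := by
  set f : ℕ → ℝ := fun k => if k = 0 then h 0 else h k - h (k-1) with hf
  have hsum : ∑ k ∈ range (j+1), f k = h j := by
    rw [Finset.sum_range_succ']
    simp only [hf, if_pos rfl]
    have : ∀ k ∈ range j, (if k + 1 = 0 then h 0 else h (k+1) - h (k+1-1)) = h (k+1) - h k := by
      intro k _; simp
    rw [Finset.sum_congr rfl this, Finset.sum_range_sub (fun k => h k)]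
    ring
  have hsq : ∑ k ∈ range (j+1), (f k)^2 = (h 0)^2 + ∑ k ∈ range j, (h (k+1) - h k)^2 := by
    rw [Finset.sum_range_succ']
    simp only [hf, if_pos rfl]
    have : ∀ k ∈ range j, (if k + 1 = 0 then h 0 else h (k+1) - h (k+1-1))^2
        = (h (k+1) - h k)^2 := by intro k _; simp
    rw [Finset.sum_congr rfl this]
    ring
  have key := sq_sum_le_card_mul_sum_sq (s := range (j+1)) (f := f)
  rw [hsum, hsq] at key
  simpa using key


lemma aux_extract (F : ℝ → ENNReal) (T' : ℝ) (hT' : 0 ≤ T')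
    (hcon : ∀ t : ℝ, 0 ≤ t → t ≤ T' → Filter.limsup F (nhdsWithin t {s | s ≠ t}) ≠ ⊤) :
    ∃ (T : ℝ) (M : ENNReal) (E : Finset ℝ), T' < T ∧ M ≠ ⊤ ∧
      ∀ t ∈ Set.Icc (0:ℝ) T, t ∉ E → F t ≤ M := by
  have key : ∀ t : Set.Icc (0:ℝ) T', ∃ (U : Set ℝ) (M : ENNReal), IsOpen U ∧ (t:ℝ) ∈ U ∧
      M ≠ ⊤ ∧ ∀ x ∈ U, x ≠ (t:ℝ) → F x < M := by
    rintro ⟨t, ht0, ht1⟩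
    have hne := hcon t ht0 ht1
    have hlt : Filter.limsup F (nhdsWithin t {s | s ≠ t}) < ⊤ := lt_top_iff_ne_top.2 hne
    set L := Filter.limsup F (nhdsWithin t {s | s ≠ t}) with hL
    have hLlt : L < L + 1 := ENNReal.lt_add_right hne one_ne_zero
    have hev : ∀ᶠ x in nhdsWithin t {s | s ≠ t}, F x < L + 1 :=
      Filter.eventually_lt_of_limsup_lt hLlt
    rw [eventually_nhdsWithin_iff, eventually_nhds_iff] at hev
    obtain ⟨U, hUp, hUo, htU⟩ := hev
    exact ⟨U, L + 1, hUo, htU, by simp [hne, ENNReal.add_ne_top], fun x hx hxt => hUp x hx hxt⟩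
  choose U M hUo hmem hMne hprop using key
  obtain ⟨fs, hfs⟩ := isCompact_Icc.elim_finite_subcover U hUo
    (fun s hs => Set.mem_iUnion.2 ⟨⟨s, hs⟩, hmem ⟨s, hs⟩⟩)
  have hOo : IsOpen (⋃ i ∈ fs, U i) := isOpen_biUnion fun i _ => hUo i
  have hTO : T' ∈ ⋃ i ∈ fs, U i := hfs ⟨hT', le_refl T'⟩
  obtain ⟨ε, hε, hball⟩ := Metric.isOpen_iff.1 hOo T' hTO
  refine ⟨T' + ε/2, fs.sup M, fs.image (fun i => ((i : Set.Icc (0:ℝ) T') : ℝ)), by linarith, ?_, ?_⟩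
  · have : fs.sup M < ⊤ := by
      rw [Finset.sup_lt_iff (by simp : (⊥ : ENNReal) < ⊤)]
      exact fun i _ => lt_top_iff_ne_top.2 (hMne i)
    exact this.ne
  · rintro t ⟨ht0, ht1⟩ htE
    have htO : t ∈ ⋃ i ∈ fs, U i := by
      by_cases h : t ≤ T'
      · exact hfs ⟨ht0, h⟩
      · apply hball
        rw [Metric.mem_ball, Real.dist_eq, abs_of_nonneg (by linarith)]
        linarith
    obtain ⟨i, hi, hti⟩ := Set.mem_iUnion₂.1 htO
    have htne : t ≠ (i : ℝ) := by
      intro h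
      exact htE (Finset.mem_image.2 ⟨i, hi, h.symm⟩)
    exact le_trans (hprop i t hti htne).le (Finset.le_sup hi)

set_option maxHeartbeats 3000000 in
lemma aux_core (x : ℝ) (hx0 : 0 < x) (hx3 : (3:ℝ) ≤ x^2)
    (g : ℕ → ℝ → ℝ)
    (hgd0 : ∀ t : ℝ, 0 ≤ t → HasDerivAt (g 0) (x⁻¹ * (1 - g 0 t * g 1 t)) t)
    (hgd : ∀ j : ℕ, ∀ t : ℝ, 0 ≤ t → HasDerivAt (g (j+1))
      (x^(2*(j+1)) * x⁻¹ * ((g j t)^2 - g (j+1) t * g (j+2) t)) t)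
    (T Mr S0 : ℝ) (hT : 0 < T) (hMr : 0 ≤ Mr) (hS0 : 0 ≤ S0)
    (E : Set ℝ) (hE : E.Countable)
    (hbound : ∀ t ∈ Set.Icc (0:ℝ) T, t ∉ E → ∀ m : ℕ, ∑ j ∈ range m, (g j t)^2 ≤ Mr)
    (hS0N : ∀ N : ℕ, ∑ j ∈ range (N+1), ((g j 0 - 1) * (x ^ j)⁻¹)^2 ≤ S0) :
    T ≤ 2 * x * Real.sqrt S0 := by
  have hxne : x ≠ 0 := hx0.ne'
  -- derivative of g in uniform form
  set gd : ℕ → ℝ → ℝ := fun j t => if j = 0 then x⁻¹ * (1 - g 0 t * g 1 t)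
    else x^(2*j) * x⁻¹ * ((g (j-1) t)^2 - g j t * g (j+1) t) with hgddef
  have hgd' : ∀ j : ℕ, ∀ t : ℝ, 0 ≤ t → HasDerivAt (g j) (gd j t) t := by
    intro j t ht
    match j with
    | 0 => simpa [hgddef] using hgd0 t ht
    | (m+1) => simpa [hgddef] using hgd m t ht
  -- continuity
  have hgc : ∀ j : ℕ, ContinuousOn (g j) (Set.Icc 0 T) :=
    fun j => fun t ht => ((hgd' j t ht.1).continuousAt).continuousWithinAt
  -- partial sums of b^2
  set Sf : ℕ → ℝ → ℝ := fun N t => ∑ j ∈ range (N+1), ((g j t - 1) * (x ^ j)⁻¹)^2 with hSfdef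
  have hSf0 : ∀ N t, 0 ≤ Sf N t := fun N t => Finset.sum_nonneg (fun j _ => sq_nonneg _)
  set W : ℕ → ℝ → ℝ := fun N t => x⁻¹ * (-2*(g N t - 1)*(g (N+1) t - 1)*(g N t)
      - (g 0 t - 1)^2 - (g N t - 1)^2 - ∑ k ∈ range N, (g (k+1) t - g k t)^2) with hWdef
  -- the summation identity
  have Hid : ∀ N : ℕ, ∀ t : ℝ,
      ∑ j ∈ range (N+1), 2 * ((g j t - 1) * (x^j)⁻¹) * (gd j t * (x^j)⁻¹) = W N t := by
    intro N t
    induction N with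
    | zero =>
      simp only [hgddef, hWdef, Finset.sum_range_succ, Finset.sum_range_zero, if_pos rfl, ↓reduceIte,
        pow_zero, inv_one, mul_one]
      field_simp
      ring
    | succ N ih =>
      rw [Finset.sum_range_succ, ih]
      simp only [hgddef, hWdef, Nat.succ_ne_zero, if_false, Nat.add_sub_cancel,
        Finset.sum_range_succ]
      have hp : x^(2*(N+1)) = x^(N+1) * x^(N+1) := by rw [two_mul, pow_add]
      rw [hp]
      have hXne : (x:ℝ)^(N+1) ≠ 0 := pow_ne_zero _ hxne
      field_simp
      ring
  -- derivative of Sf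
  have hSd : ∀ N : ℕ, ∀ t : ℝ, 0 ≤ t → HasDerivAt (Sf N) (W N t) t := by
    intro N t ht
    rw [← Hid N t]
    apply HasDerivAt.fun_sum
    intro j _
    have h := (((hgd' j t ht).sub_const 1).mul_const ((x^j)⁻¹)).fun_pow' 2
    refine h.congr_deriv ?_
    rw [Finset.sum_range_succ, Finset.sum_range_one]
    norm_num
    ring
  -- constants
  set K : ℝ := 2*(1 + Real.sqrt Mr)^2 + 2 with hKdef
  have hsqMr : 0 ≤ Real.sqrt Mr := Real.sqrt_nonneg _
  have hK0 : 0 ≤ K := by positivity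
  have hxinv : (0:ℝ) ≤ x⁻¹ := inv_nonneg.mpr hx0.le
  -- pointwise bound on W at good points
  have hW : ∀ N : ℕ, ∀ t ∈ Set.Icc (0:ℝ) T, t ∉ E →
      W N t ≤ x⁻¹ * (-(4 + Sf N t)/4 + K * |g N t|) := by
    intro N t htI htE
    have hb := hbound t htI htE
    have hone : ∀ j, (g j t)^2 ≤ Mr := fun j =>
      le_trans (Finset.single_le_sum (f := fun i => (g i t)^2) (fun i _ => sq_nonneg _)
        (Finset.self_mem_range_succ j)) (hb (j+1))
    have habs : ∀ j, |g j t| ≤ Real.sqrt Mr := fun j => by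
      rw [← Real.sqrt_sq_eq_abs]; exact Real.sqrt_le_sqrt (hone j)
    have hβ : ∀ j, |g j t - 1| ≤ 1 + Real.sqrt Mr := by
      intro j
      have h1 := abs_add_le (g j t) (-1)
      simp only [abs_neg, abs_one] at h1
      have h2 := habs j
      have h3 : g j t - 1 = g j t + (-1) := by ring
      rw [h3]
      linarith
    have A1 : -2*(g N t - 1)*(g (N+1) t - 1)*(g N t) ≤ 2*(1+Real.sqrt Mr)^2 * |g N t| := by
      calc -2*(g N t - 1)*(g (N+1) t - 1)*(g N t)
          ≤ |(-2)*(g N t - 1)*(g (N+1) t - 1)*(g N t)| := by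
            have := le_abs_self ((-2)*(g N t - 1)*(g (N+1) t - 1)*(g N t))
            nlinarith [this]
        _ = 2 * |g N t - 1| * |g (N+1) t - 1| * |g N t| := by
            rw [abs_mul, abs_mul, abs_mul]
            norm_num
        _ ≤ 2 * (1+Real.sqrt Mr) * (1+Real.sqrt Mr) * |g N t| := by
            have b1 := hβ N
            have b2 := hβ (N+1)
            gcongr
        _ = 2*(1+Real.sqrt Mr)^2 * |g N t| := by ring
    have A2 : -(g N t - 1)^2 ≤ -1 + 2*|g N t| := by
      nlinarith [le_abs_self (g N t), sq_nonneg (g N t)]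
    have A3 : Sf N t ≤ 4 * ((g 0 t - 1)^2 + ∑ k ∈ range N, (g (k+1) t - g k t)^2) := by
      set q : ℝ := (g 0 t - 1)^2 + ∑ k ∈ range N, (g (k+1) t - g k t)^2 with hq
      have hq0 : 0 ≤ q := by
        rw [hq]
        have : (0:ℝ) ≤ ∑ k ∈ range N, (g (k+1) t - g k t)^2 :=
          Finset.sum_nonneg fun k _ => sq_nonneg _
        positivity
      have hterm : ∀ j ∈ range (N+1),
          ((g j t - 1) * (x ^ j)⁻¹)^2 ≤ ((j+1 : ℝ) * ((x^2)⁻¹)^j) * q := by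
        intro j hj
        have hjN : j ≤ N := Nat.lt_succ_iff.mp (Finset.mem_range.mp hj)
        have hcs := aux_cs (fun k => g k t - 1) j
        have hΔ : (∑ k ∈ range j, ((g (k+1) t - 1) - (g k t - 1))^2)
            = ∑ k ∈ range j, (g (k+1) t - g k t)^2 :=
          Finset.sum_congr rfl (fun k _ => by ring_nf)
        rw [hΔ] at hcs
        have hsub : ∑ k ∈ range j, (g (k+1) t - g k t)^2
            ≤ ∑ k ∈ range N, (g (k+1) t - g k t)^2 :=
          Finset.sum_le_sum_of_subset_of_nonneg (Finset.range_subset_range.mpr hjN)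
            (fun k _ _ => sq_nonneg _)
        have h1 : (g j t - 1)^2 ≤ (j+1:ℝ) * q := by
          refine le_trans hcs ?_
          have : (g 0 t - 1)^2 + ∑ k ∈ range j, (g (k+1) t - g k t)^2 ≤ q := by
            rw [hq]; linarith
          have hj1 : (0:ℝ) ≤ (j+1:ℝ) := by positivity
          nlinarith [hcs, this]
        have hpow : ((g j t - 1) * (x ^ j)⁻¹)^2 = (g j t - 1)^2 * ((x^2)⁻¹)^j := by
          rw [mul_pow, ← inv_pow, ← inv_pow, ← pow_mul, ← pow_mul, Nat.mul_comm]
        rw [hpow]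
        calc (g j t - 1)^2 * ((x^2)⁻¹)^j ≤ ((j+1:ℝ) * q) * ((x^2)⁻¹)^j :=
              mul_le_mul_of_nonneg_right h1 (by positivity)
          _ = ((j+1:ℝ) * ((x^2)⁻¹)^j) * q := by ring
      have hy0 : (0:ℝ) ≤ (x^2)⁻¹ := by positivity
      have hy13 : (x^2)⁻¹ ≤ 1/3 := by
        have h3 : (0:ℝ) < 3 := by norm_num
        have := inv_anti₀ h3 hx3
        simpa using this
      calc Sf N t ≤ ∑ j ∈ range (N+1), ((j+1:ℝ) * ((x^2)⁻¹)^j) * q :=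
            Finset.sum_le_sum hterm
        _ = (∑ j ∈ range (N+1), (j+1:ℝ) * ((x^2)⁻¹)^j) * q := by rw [Finset.sum_mul]
        _ ≤ 4 * q := mul_le_mul_of_nonneg_right (aux_weight_sum hy0 hy13 _) hq0
    have inner : -2*(g N t - 1)*(g (N+1) t - 1)*(g N t) - (g 0 t - 1)^2 - (g N t - 1)^2
        - ∑ k ∈ range N, (g (k+1) t - g k t)^2 ≤ -(4 + Sf N t)/4 + K * |g N t| := by
      rw [hKdef]
      linarith [A1, A2, A3]
    calc W N t = x⁻¹ * (-2*(g N t - 1)*(g (N+1) t - 1)*(g N t) - (g 0 t - 1)^2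
          - (g N t - 1)^2 - ∑ k ∈ range N, (g (k+1) t - g k t)^2) := rfl
      _ ≤ x⁻¹ * (-(4 + Sf N t)/4 + K * |g N t|) := mul_le_mul_of_nonneg_left inner hxinv
  -- continuity facts
  have hSfc : ∀ N, ContinuousOn (Sf N) (Set.Icc 0 T) := fun N =>
    continuousOn_finset_sum _ (fun j _ =>
      (((hgc j).sub continuousOn_const).mul continuousOn_const).pow 2)
  have hWc : ∀ N, ContinuousOn (W N) (Set.Icc 0 T) := by
    intro N
    apply ContinuousOn.mul continuousOn_const
    apply ContinuousOn.sub
    apply ContinuousOn.sub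
    apply ContinuousOn.sub
    · exact ((continuousOn_const.mul ((hgc N).sub continuousOn_const)).mul
        ((hgc (N+1)).sub continuousOn_const)).mul (hgc N)
    · exact ((hgc 0).sub continuousOn_const).pow 2
    · exact ((hgc N).sub continuousOn_const).pow 2
    · exact continuousOn_finset_sum _ (fun k _ => ((hgc (k+1)).sub (hgc k)).pow 2)
  have h4Spos : ∀ N t, (0:ℝ) < 4 + Sf N t := fun N t => by
    have := hSf0 N t; linarith
  have hVWc : ∀ N, ContinuousOn (fun t => W N t / (4 + Sf N t)) (Set.Icc 0 T) := fun N =>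
    (hWc N).div (continuousOn_const.add (hSfc N)) (fun t _ => (h4Spos N t).ne')
  have huIcc : Set.uIcc (0:ℝ) T = Set.Icc 0 T := Set.uIcc_of_le hT.le
  have hIint : ∀ N, IntervalIntegrable (fun t => W N t / (4 + Sf N t)) volume 0 T :=
    fun N => ContinuousOn.intervalIntegrable (by rw [huIcc]; exact hVWc N)
  have hgabsint : ∀ N, IntervalIntegrable (fun t => |g N t|) volume 0 T :=
    fun N => ContinuousOn.intervalIntegrable (by rw [huIcc]; exact (hgc N).abs)
  have hgsqint : ∀ N, IntervalIntegrable (fun t => (g N t)^2) volume 0 T :=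
    fun N => ContinuousOn.intervalIntegrable (by rw [huIcc]; exact (hgc N).pow 2)
  have hrhsint : ∀ N, IntervalIntegrable (fun t => x⁻¹*(-(1/4)) + x⁻¹*(K/4) * |g N t|) volume 0 T :=
    fun N => intervalIntegrable_const.add ((hgabsint N).const_mul _)
  -- FTC
  have hFTC : ∀ N, ∫ t in (0:ℝ)..T, W N t / (4 + Sf N t)
      = Real.log (4 + Sf N T) - Real.log (4 + Sf N 0) := by
    intro N
    apply intervalIntegral.integral_eq_sub_of_hasDerivAt
    · intro t ht
      rw [huIcc] at ht
      have h4S : (4:ℝ) + Sf N t ≠ 0 := (h4Spos N t).ne'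
      have h := ((hasDerivAt_const t (4:ℝ)).add (hSd N t ht.1)).log h4S
      simpa using h
    · exact hIint N
  -- null set
  have hEnull : (volume.restrict (Set.Icc (0:ℝ) T)) E = 0 := by
    have h0 : volume E = 0 := Set.Countable.measure_zero hE _
    have h1 : (volume.restrict (Set.Icc (0:ℝ) T)) E ≤ volume E :=
      Measure.restrict_le_self E
    exact le_antisymm (le_trans h1 h0.le) (zero_le)
  have hae : ∀ᵐ t ∂(volume.restrict (Set.Icc (0:ℝ) T)), t ∉ E := by
    rw [MeasureTheory.ae_iff]
    simpa using hEnull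
  have haeI : ∀ᵐ t ∂(volume.restrict (Set.Icc (0:ℝ) T)), t ∈ Set.Icc (0:ℝ) T :=
    MeasureTheory.ae_restrict_mem measurableSet_Icc
  -- integral comparison
  have hmono : ∀ N, ∫ t in (0:ℝ)..T, W N t / (4 + Sf N t)
      ≤ ∫ t in (0:ℝ)..T, (x⁻¹*(-(1/4)) + x⁻¹*(K/4) * |g N t|) := by
    intro N
    apply intervalIntegral.integral_mono_ae_restrict hT.le (hIint N) (hrhsint N)
    filter_upwards [hae, haeI] with t htE htI
    have h4S := h4Spos N t
    rw [div_le_iff₀ h4S]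
    have h1 := hW N t htI htE
    have h2 : (0:ℝ) ≤ x⁻¹*(K/4) * |g N t| * Sf N t := by
      have := hSf0 N t
      have := abs_nonneg (g N t)
      positivity
    nlinarith [h1, h2]
  have hrhsval : ∀ N, ∫ t in (0:ℝ)..T, (x⁻¹*(-(1/4)) + x⁻¹*(K/4) * |g N t|)
      = x⁻¹*(-(1/4))*T + x⁻¹*(K/4) * ∫ t in (0:ℝ)..T, |g N t| := by
    intro N
    rw [intervalIntegral.integral_add intervalIntegrable_const ((hgabsint N).const_mul _),
      intervalIntegral.integral_const_mul, intervalIntegral.integral_const]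
    simp [smul_eq_mul]
    ring
  -- key inequality for each N
  have key : ∀ N, Real.log 4 - Real.log (4 + S0)
      ≤ x⁻¹*(-(1/4))*T + x⁻¹*(K/4) * ∫ t in (0:ℝ)..T, |g N t| := by
    intro N
    have h1 := hFTC N
    have h2 := hmono N
    have h3 := hrhsval N
    have l1 : Real.log 4 ≤ Real.log (4 + Sf N T) :=
      Real.log_le_log (by norm_num) (by linarith [hSf0 N T])
    have l2 : Real.log (4 + Sf N 0) ≤ Real.log (4 + S0) :=
      Real.log_le_log (h4Spos N 0) (by linarith [hS0N N])
    linarith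
  -- the error integrals
  obtain ⟨c, hcdef⟩ : ∃ c : ℕ → ℝ, ∀ N, c N = ∫ t in (0:ℝ)..T, (g N t)^2 :=
    ⟨_, fun _ => rfl⟩
  have hc0 : ∀ N, 0 ≤ c N := fun N => by
    rw [hcdef N]
    exact intervalIntegral.integral_nonneg hT.le (fun t _ => sq_nonneg _)
  have hcsum : ∀ m, ∑ N ∈ range m, c N ≤ Mr * T := by
    intro m
    have e1 : ∑ N ∈ range m, c N = ∫ t in (0:ℝ)..T, (∑ N ∈ range m, (g N t)^2) := by
      rw [intervalIntegral.integral_finset_sum (fun i _ => hgsqint i)]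
      exact Finset.sum_congr rfl (fun i _ => hcdef i)
    rw [e1]
    have hsumint : IntervalIntegrable (fun t => ∑ N ∈ range m, (g N t)^2) volume 0 T := by
      apply ContinuousOn.intervalIntegrable
      rw [huIcc]
      exact continuousOn_finset_sum _ (fun i _ => (hgc i).pow 2)
    have e2 : ∫ t in (0:ℝ)..T, (∑ N ∈ range m, (g N t)^2) ≤ ∫ t in (0:ℝ)..T, Mr := by
      apply intervalIntegral.integral_mono_ae_restrict hT.le hsumint
        intervalIntegrable_const
      filter_upwards [hae, haeI] with t htE htI
      exact hbound t htI htE m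
    have e3 : ∫ _t in (0:ℝ)..T, Mr = Mr * T := by
      rw [intervalIntegral.integral_const, smul_eq_mul]
      ring
    exact le_trans e2 (le_of_eq e3)
  have hsummable : Summable c := summable_of_sum_range_le hc0 hcsum
  have hctend : Tendsto c atTop (nhds 0) := hsummable.tendsto_atTop_zero
  -- epsilon argument
  have main : ∀ ε : ℝ, 0 < ε → Real.log 4 - Real.log (4+S0)
      ≤ x⁻¹*(-(1/4))*T + x⁻¹*(K/4)*(ε*T/2) := by
    intro ε hε
    have habsint2 : ∀ N, ∫ t in (0:ℝ)..T, |g N t| ≤ ε*T/2 + c N / (2*ε) := by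
      intro N
      have hint2 : IntervalIntegrable (fun t => ε/2 + (g N t)^2/(2*ε)) volume 0 T :=
        intervalIntegrable_const.add ((hgsqint N).div_const _)
      have h1 : ∫ t in (0:ℝ)..T, |g N t| ≤ ∫ t in (0:ℝ)..T, (ε/2 + (g N t)^2/(2*ε)) :=
        intervalIntegral.integral_mono_on hT.le (hgabsint N) hint2
          (fun t _ => aux_abs_le hε)
      have hA : ∫ _t in (0:ℝ)..T, (ε/2 : ℝ) = (T - 0) • (ε/2) :=
        intervalIntegral.integral_const _
      have hB : ∫ t in (0:ℝ)..T, ((g N t)^2/(2*ε))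
          = (∫ t in (0:ℝ)..T, (g N t)^2)/(2*ε) := by
        apply intervalIntegral.integral_div
      have h2 : ∫ t in (0:ℝ)..T, (ε/2 + (g N t)^2/(2*ε))
          = (T - 0) • (ε/2) + (∫ t in (0:ℝ)..T, (g N t)^2)/(2*ε) := by
        rw [intervalIntegral.integral_add intervalIntegrable_const
          ((hgsqint N).div_const _), hA, hB]
      rw [smul_eq_mul] at h2
      have hcs : c N = ∫ t in (0:ℝ)..T, (g N t)^2 := hcdef N
      rw [← hcs] at h2
      have heq : (T - 0) * (ε/2) = ε*T/2 := by ring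
      rw [heq] at h2
      linarith only [h1, h2]
    have hten : Tendsto (fun N => x⁻¹*(-(1/4))*T + x⁻¹*(K/4)*(ε*T/2 + c N/(2*ε))) atTop
        (nhds (x⁻¹*(-(1/4))*T + x⁻¹*(K/4)*(ε*T/2 + 0/(2*ε)))) := by
      apply Tendsto.const_add
      apply Tendsto.const_mul
      apply Tendsto.const_add
      exact hctend.div_const _
    have hfinal : Real.log 4 - Real.log (4+S0)
        ≤ x⁻¹*(-(1/4))*T + x⁻¹*(K/4)*(ε*T/2 + 0/(2*ε)) := by
      apply ge_of_tendsto hten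
      apply Filter.Eventually.of_forall
      intro N
      have h1 := key N
      have h2 := habsint2 N
      have h3 : x⁻¹*(K/4) * ∫ t in (0:ℝ)..T, |g N t| ≤ x⁻¹*(K/4)*(ε*T/2 + c N/(2*ε)) := by
        apply mul_le_mul_of_nonneg_left h2
        positivity
      linarith
    have h0 : (0:ℝ)/(2*ε) = 0 := by simp
    rw [h0, add_zero] at hfinal
    exact hfinal
  -- remove epsilon
  have hfin : Real.log 4 - Real.log (4+S0) ≤ x⁻¹*(-(1/4))*T := by
    by_contra hcon
    push_neg at hcon
    set L := Real.log 4 - Real.log (4+S0) with hLdef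
    set δ := L - x⁻¹*(-(1/4))*T with hδdef
    have hδ0 : 0 < δ := by rw [hδdef]; linarith
    set D := x⁻¹*(K/4)*(T/2) with hDdef
    have hD0 : 0 ≤ D := by rw [hDdef]; positivity
    have h1 := main (δ/(2*(D+1))) (by positivity)
    have h2 : x⁻¹*(K/4)*((δ/(2*(D+1)))*T/2) = D*(δ/(2*(D+1))) := by
      rw [hDdef]; ring
    rw [h2] at h1
    have h3 : D*(δ/(2*(D+1))) ≤ δ/2 := by
      have hD1 : (0:ℝ) < D + 1 := by linarith
      have heq2 : D*(δ/(2*(D+1))) = (D/(D+1))*(δ/2) := by field_simp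
      have hle : D/(D+1) ≤ 1 := by
        rw [div_le_one hD1]; linarith
      calc D*(δ/(2*(D+1))) = (D/(D+1))*(δ/2) := heq2
        _ ≤ 1*(δ/2) := mul_le_mul_of_nonneg_right hle (by positivity)
        _ = δ/2 := one_mul _
    linarith
  -- conclude
  have hstep1 : x⁻¹*T/4 ≤ Real.log (4+S0) - Real.log 4 := by nlinarith [hfin]
  have hlog : Real.log (4+S0) - Real.log 4 = Real.log (1 + S0/4) := by
    rw [← Real.log_div (by positivity) (by norm_num : (4:ℝ) ≠ 0)]
    congr 1
    ring
  have hsq2 : Real.sqrt (S0/4) = Real.sqrt S0 / 2 := by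
    rw [show S0/4 = S0 * (1/2)^2 by ring, Real.sqrt_mul hS0,
      Real.sqrt_sq (by norm_num : (0:ℝ) ≤ 1/2)]
    ring
  have hsq : Real.log (1 + S0/4) ≤ Real.sqrt S0 / 2 := by
    have h := aux_log_le_sqrt (u := S0/4) (by positivity)
    rw [hsq2] at h
    exact h
  have hfinal2 : x⁻¹*T/4 ≤ Real.sqrt S0 / 2 := by
    rw [hlog] at hstep1
    linarith
  have hx4 : (0:ℝ) < 4*x := by positivity
  have hTeq : T = 4*x*(x⁻¹*T/4) := by field_simp
  calc T = 4*x*(x⁻¹*T/4) := hTeq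
    _ ≤ 4*x*(Real.sqrt S0/2) := mul_le_mul_of_nonneg_left hfinal2 hx4.le
    _ = 2*x*Real.sqrt S0 := by ring


set_option maxHeartbeats 2000000 in
/-- Every solution of the forced dyadic model (force `f = (λ^(-1/3),0,…)`, `λ = 2^(5/2)`)
with `a(0) ∈ l²` blows up in the `H^{5/6}` norm at some time
`t* ≤ 2λ^(1/3)‖a(0) - ā‖_{l²}`, where `ā_j = λ^(-j/3)` is the fixed point. -/
theorem dyadic_blow_up (l : ℝ) (hl : l = (2 : ℝ) ^ ((5 : ℝ) / 2)) (a : ℕ → ℝ → ℝ)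
    (hderiv0 : ∀ t : ℝ, 0 ≤ t →
      HasDerivAt (a 0) (-(a 0 t * a 1 t) + l ^ (-(1 : ℝ) / 3)) t)
    (hderiv : ∀ j : ℕ, 1 ≤ j → ∀ t : ℝ, 0 ≤ t → HasDerivAt (a j)
      (l ^ ((j : ℝ) - 1) * a (j - 1) t ^ 2 - l ^ (j : ℝ) * a j t * a (j + 1) t) t)
    (hl2 : ∀ t : ℝ, 0 ≤ t → Summable (fun j : ℕ => a j t ^ 2)) :
    ∃ tstar : ℝ, 0 ≤ tstar ∧
      tstar ≤ 2 * l ^ ((1 : ℝ) / 3) *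
        Real.sqrt (∑' j : ℕ, (a j 0 - l ^ (-(j : ℝ) / 3)) ^ 2) ∧
      Filter.limsup
        (fun t : ℝ => ∑' j : ℕ, ENNReal.ofReal ((2 : ℝ) ^ ((5 : ℝ) / 3 * j) * a j t ^ 2))
        (nhdsWithin tstar {t | t ≠ tstar}) = ⊤ := by
  have hl0 : (0:ℝ) < l := by rw [hl]; positivity
  set x : ℝ := l ^ ((1:ℝ)/3) with hxdef
  have hx0 : 0 < x := Real.rpow_pos_of_pos hl0 _
  have hxne : x ≠ 0 := hx0.ne'
  -- power conversion lemmas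
  have hxn : ∀ n : ℕ, x ^ n = l ^ ((n:ℝ)/3) := by
    intro n
    rw [hxdef, ← Real.rpow_natCast (l ^ ((1:ℝ)/3)) n, ← Real.rpow_mul hl0.le]
    congr 1
    ring
  have hlj : ∀ j : ℕ, l ^ ((j:ℝ)) = x ^ (3*j) := by
    intro j
    rw [hxn (3*j)]
    congr 1
    push_cast
    ring
  have hbar : ∀ j : ℕ, l ^ (-(j:ℝ)/3) = (x ^ j)⁻¹ := by
    intro j
    rw [hxn j, ← Real.rpow_neg hl0.le]
    congr 1
    ring
  have hl13 : l ^ (-(1:ℝ)/3) = x⁻¹ := by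
    have := hbar 1
    simpa using this
  have hx3 : (3:ℝ) ≤ x^2 := by
    have hy3 : (x^2)^3 = 32 := by
      rw [← pow_mul, hxn 6, show ((6:ℕ):ℝ)/3 = ((2:ℕ):ℝ) by norm_num, Real.rpow_natCast, hl,
        ← Real.rpow_natCast ((2:ℝ) ^ ((5:ℝ)/2)) 2, ← Real.rpow_mul (by norm_num : (0:ℝ) ≤ 2),
        show (5:ℝ)/2*((2:ℕ):ℝ) = ((5:ℕ):ℝ) by norm_num, Real.rpow_natCast]
      norm_num
    have h27 : (3:ℝ)^3 ≤ (x^2)^3 := by rw [hy3]; norm_num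
    exact le_of_pow_le_pow_left₀ (by norm_num) (sq_nonneg x) h27
  -- the rescaled solution
  set g : ℕ → ℝ → ℝ := fun j t => x ^ j * a j t with hgdef
  have hgd0 : ∀ t : ℝ, 0 ≤ t → HasDerivAt (g 0) (x⁻¹ * (1 - g 0 t * g 1 t)) t := by
    intro t ht
    have h := (hderiv0 t ht).const_mul ((x:ℝ)^0)
    have heq : x^0 * (-(a 0 t * a 1 t) + l ^ (-(1:ℝ)/3))
        = x⁻¹ * (1 - g 0 t * g 1 t) := by
      rw [hl13, hgdef]
      simp only [pow_zero, pow_one, one_mul]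
      field_simp
      ring
    rw [heq] at h
    exact h
  have hgd : ∀ j : ℕ, ∀ t : ℝ, 0 ≤ t → HasDerivAt (g (j+1))
      (x^(2*(j+1)) * x⁻¹ * ((g j t)^2 - g (j+1) t * g (j+2) t)) t := by
    intro j t ht
    have h := (hderiv (j+1) (by omega) t ht).const_mul ((x:ℝ)^(j+1))
    have e1 : l ^ (((j+1:ℕ):ℝ) - 1) = x ^ (3*j) := by
      rw [hxn (3*j)]
      congr 1
      push_cast
      ring
    have e2 : l ^ (((j+1:ℕ)):ℝ) = x ^ (3*j+3) := by
      rw [hxn (3*j+3)]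
      congr 1
      push_cast
      ring
    have e3 : (j+1) - 1 = j := by omega
    rw [e1, e2, e3] at h
    have heq : x^(j+1) * (x^(3*j) * a j t ^ 2 - x^(3*j+3) * a (j+1) t * a (j+2) t)
        = x^(2*(j+1)) * x⁻¹ * ((g j t)^2 - g (j+1) t * g (j+2) t) := by
      rw [hgdef]
      simp only
      field_simp
      ring
    rw [heq] at h
    exact h
  -- summability of initial data
  have hsumA : Summable (fun j : ℕ => (a j 0)^2) := hl2 0 le_rfl
  have hx2gt : (1:ℝ) < x^2 := by nlinarith
  have hgeo : Summable (fun j : ℕ => ((x^2)⁻¹)^j) := by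
    apply summable_geometric_of_lt_one (by positivity)
    rw [inv_lt_one_iff₀]
    right
    exact hx2gt
  have hsumb : Summable (fun j : ℕ => (a j 0 - l ^ (-(j:ℝ)/3))^2) := by
    apply Summable.of_nonneg_of_le (f := fun j : ℕ => 2*(a j 0)^2 + 2*((x^2)⁻¹)^j)
      (fun j => sq_nonneg _)
    · intro j
      have hc : l ^ (-(j:ℝ)/3) = (x^j)⁻¹ := hbar j
      have hc2 : ((x^j)⁻¹)^2 = ((x^2)⁻¹)^j := by
        rw [← inv_pow, ← inv_pow, ← pow_mul, ← pow_mul, Nat.mul_comm]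
      rw [hc, ← hc2]
      nlinarith [sq_nonneg (a j 0 + (x^j)⁻¹)]
    · exact (hsumA.mul_left 2).add (hgeo.mul_left 2)
  set S0 := ∑' j : ℕ, (a j 0 - l ^ (-(j:ℝ)/3))^2 with hS0def
  have hS0nn : 0 ≤ S0 := tsum_nonneg (fun j => sq_nonneg _)
  set F := fun t : ℝ => ∑' j : ℕ, ENNReal.ofReal ((2:ℝ)^((5:ℝ)/3 * j) * a j t^2) with hFdef
  by_contra hcon
  push_neg at hcon
  obtain ⟨T, M, E, hTT', hMne, hFle⟩ := aux_extract F (2*x*Real.sqrt S0) (by positivity)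
    (fun t h1 h2 => hcon t h1 h2)
  have hT0 : 0 < T := lt_of_le_of_lt (by positivity) hTT'
  have h2pow : ∀ (j:ℕ) (t:ℝ), (2:ℝ)^((5:ℝ)/3 * j) * a j t^2 = (g j t)^2 := by
    intro j t
    have hx2j : x^(2*j) = (2:ℝ)^((5:ℝ)/3 * j) := by
      rw [hxn (2*j), hl, ← Real.rpow_mul (by norm_num : (0:ℝ) ≤ 2)]
      congr 1
      push_cast
      ring
    have hsq : x^(2*j) = (x^j)^2 := by rw [Nat.mul_comm 2 j, pow_mul]
    rw [← hx2j, hsq, hgdef]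
    simp only
    ring
  have hMr0 : (0:ℝ) ≤ M.toReal := ENNReal.toReal_nonneg
  have hbound : ∀ t ∈ Set.Icc (0:ℝ) T, t ∉ (E:Set ℝ) → ∀ m : ℕ,
      ∑ j ∈ Finset.range m, (g j t)^2 ≤ M.toReal := by
    intro t htI htE m
    have hF := hFle t htI (by simpa using htE)
    have hle : (∑ j ∈ Finset.range m, ENNReal.ofReal ((g j t)^2)) ≤ M := by
      refine le_trans ?_ hF
      rw [hFdef]
      simp only
      refine le_trans (le_of_eq ?_) (ENNReal.sum_le_tsum (Finset.range m))
      exact Finset.sum_congr rfl (fun j _ => by rw [h2pow j t])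
    have heq : ∑ j ∈ Finset.range m, (g j t)^2
        = (∑ j ∈ Finset.range m, ENNReal.ofReal ((g j t)^2)).toReal := by
      rw [ENNReal.toReal_sum (fun j _ => ENNReal.ofReal_ne_top)]
      exact Finset.sum_congr rfl (fun j _ => (ENNReal.toReal_ofReal (sq_nonneg _)).symm)
    rw [heq]
    exact ENNReal.toReal_mono hMne hle
  have hS0N : ∀ N : ℕ, ∑ j ∈ Finset.range (N+1), ((g j 0 - 1) * (x ^ j)⁻¹)^2 ≤ S0 := by
    intro N
    have hterm : ∀ j : ℕ, ((g j 0 - 1) * (x ^ j)⁻¹)^2 = (a j 0 - l ^ (-(j:ℝ)/3))^2 := by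
      intro j
      rw [hbar j, hgdef]
      simp only
      have hxj : (x:ℝ)^j ≠ 0 := pow_ne_zero _ hxne
      field_simp
    calc ∑ j ∈ Finset.range (N+1), ((g j 0 - 1) * (x ^ j)⁻¹)^2
        = ∑ j ∈ Finset.range (N+1), (a j 0 - l ^ (-(j:ℝ)/3))^2 :=
          Finset.sum_congr rfl (fun j _ => hterm j)
      _ ≤ S0 := by rw [hS0def]; exact Summable.sum_le_tsum _ (fun i _ => sq_nonneg _) hsumb
  have hfinal := aux_core x hx0 hx3 g hgd0 hgd T M.toReal S0 hT0 hMr0 hS0nn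
    ((E : Finset ℝ) : Set ℝ) E.countable_toSet hbound hS0N
  linarith [hfinal, hTT']
end
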